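/- arXiv:2002.09932 — 7 statements merged into one kernel-verified Lean document; each statement's English description precedes it below -/
import Mathlib

section
/- Let δ be a range map, S a straight and coated graded subset of Cl_δ, and n ≥ 0. For a covering pair u ⋖ v in the poset S(n), set λ(u,v) := (−i, u_i) ∈ ℤ×ℤ, where i is the unique position at which u and v differ, and order ℤ×ℤ lexicographically. Then λ is an EL-labeling of S(n): for every interval [x,y] of S(n) there is exactly one maximal chain x = w^0 ⋖ w^1 ⋖ ⋯ ⋖ w^k = y whose label sequence λ(w^0,w^1), …, λ(w^{k−1},w^k) is weakly increasing, and the label sequence of this chain is lexicographically minimal among the label sequences of all maximal chains of [x,y]. Moreover, between any two elements of S(n) there is at most one maximal chain whose label sequence is weakly decreasing. -/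
/-- Componentwise order on words of natural numbers of the same length. -/
def wle (u v : List ℕ) : Prop := List.Forall₂ (· ≤ ·) u v

/-- Strict componentwise order. -/
def wlt (u v : List ℕ) : Prop := wle u v ∧ u ≠ v

/-- `u` is a `δ`-cliff: the letter at (0-indexed) position `i` is at most `δ i`.
(The range map is 0-indexed: `δ i` is the bound of the `(i+1)`-st letter.) -/
def IsCliff (δ : ℕ → ℕ) (u : List ℕ) : Prop := ∀ i < u.length, u.getD i 0 ≤ δ i

def ClosedByPrefix (S : Set (List ℕ)) : Prop := ∀ u v : List ℕ, u ++ v ∈ S → u ∈ S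

def MinExtendable (S : Set (List ℕ)) : Prop := [] ∈ S ∧ ∀ u ∈ S, u ++ [0] ∈ S

def MaxExtendable (δ : ℕ → ℕ) (S : Set (List ℕ)) : Prop :=
  [] ∈ S ∧ ∀ u ∈ S, u ++ [δ u.length] ∈ S

/-- `v` covers `u` in the subposet `S` (componentwise order on words of equal length). -/
def CoversIn (S : Set (List ℕ)) (u v : List ℕ) : Prop :=
  u ∈ S ∧ v ∈ S ∧ wlt u v ∧ ¬ ∃ w ∈ S, wlt u w ∧ wlt w v

/-- Auxiliary for the decrementation map: input is the reversed word. -/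
noncomputable def decrAux (S : Set (List ℕ)) : List ℕ → List ℕ
  | [] => []
  | a :: r => decrAux S r ++ [sSup {b | b ≤ a ∧ decrAux S r ++ [b] ∈ S}]

/-- The `S`-decrementation map. -/
noncomputable def decr (S : Set (List ℕ)) (u : List ℕ) : List ℕ := decrAux S u.reverse

/-- Auxiliary for the incrementation map: input is the reversed word. -/
noncomputable def incrAux (δ : ℕ → ℕ) (S : Set (List ℕ)) : List ℕ → List ℕ
  | [] => []
  | a :: r => incrAux δ S r ++
      [sInf {b | a ≤ b ∧ b ≤ δ r.length ∧ incrAux δ S r ++ [b] ∈ S}]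

/-- The `S`-incrementation map. -/
noncomputable def incr (δ : ℕ → ℕ) (S : Set (List ℕ)) (u : List ℕ) : List ℕ :=
  incrAux δ S u.reverse

/-- The `S`-elevation map. -/
noncomputable def elev (S : Set (List ℕ)) (u : List ℕ) : List ℕ :=
  (List.range u.length).map fun i =>
    Set.ncard {a : ℕ | a < u.getD i 0 ∧ u.take i ++ [a] ∈ S}

/-- A `δ`-hill: a weakly increasing `δ`-cliff. -/
def IsHill (δ : ℕ → ℕ) (u : List ℕ) : Prop :=
  IsCliff δ u ∧ List.Pairwise (· ≤ ·) u

/-- A `δ`-avalanche: a `δ`-cliff whose nonempty prefixes have small sums. -/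
def IsAval (δ : ℕ → ℕ) (u : List ℕ) : Prop :=
  IsCliff δ u ∧ ∀ k < u.length, (u.take (k + 1)).sum ≤ δ k

/-- A `δ`-canyon. -/
def IsCanyon (δ : ℕ → ℕ) (u : List ℕ) : Prop :=
  IsCliff δ u ∧ ∀ i < u.length, ∀ j, 1 ≤ j → j ≤ u.getD i 0 → j ≤ i →
    u.getD (i - j) 0 + j ≤ u.getD i 0

/-- The `δ`-reduction map. -/
def reduce (δ : ℕ → ℕ) (u : List ℕ) : List ℕ :=
  (List.range u.length).map fun i => min (u.getD i 0) (δ i)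

/-- `δ` is valley-free. -/
def ValleyFree (δ : ℕ → ℕ) : Prop :=
  ¬ ∃ i₁ i₂ i₃ : ℕ, i₁ < i₂ ∧ i₂ < i₃ ∧ δ i₂ < δ i₁ ∧ δ i₂ < δ i₃

/-- `S` is straight: every covering pair in `S` differs in exactly one position. -/
def Straight (S : Set (List ℕ)) : Prop :=
  ∀ u v, CoversIn S u v → ∃! i, i < u.length ∧ u.getD i 0 ≠ v.getD i 0

/-- `S` is coated. -/
def Coated (S : Set (List ℕ)) : Prop :=
  ∀ u v, u ∈ S → v ∈ S → wle u v →
    ∀ i, 1 ≤ i → i + 1 ≤ u.length → u.take i ++ v.drop i ∈ S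

/-- `l` is the EL-label `(-i, u_i)` of the covering pair `p = (u, v)`, where `i` is a
(1-indexed) position at which `u` and `v` differ. -/
def LabelOf (p : List ℕ × List ℕ) (l : ℤ × ℤ) : Prop :=
  ∃ i < p.1.length, p.1.getD i 0 ≠ p.2.getD i 0 ∧
    l = (-((i : ℤ) + 1), (p.1.getD i 0 : ℤ))

/-- `c` is a maximal (saturated) chain from `x` to `y` in the subposet `S`. -/
def IsSatChain (S : Set (List ℕ)) (x y : List ℕ) (c : List (List ℕ)) : Prop :=
  c.head? = some x ∧ c.getLast? = some y ∧ List.Chain' (CoversIn S) c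

/-- `l` is the label sequence of the chain `c`. -/
def LabelSeq (c : List (List ℕ)) (l : List (ℤ × ℤ)) : Prop :=
  List.Forall₂ LabelOf (c.zip c.tail) l

/-- Lexicographic order on `ℤ × ℤ`. -/
def lexLE (p q : ℤ × ℤ) : Prop := p.1 < q.1 ∨ (p.1 = q.1 ∧ p.2 ≤ q.2)

def lexLT (p q : ℤ × ℤ) : Prop := p.1 < q.1 ∨ (p.1 = q.1 ∧ p.2 < q.2)

/-- Lexicographic comparison of label sequences. -/
def seqLexLE (l l' : List (ℤ × ℤ)) : Prop := List.Lex lexLT l l' ∨ l = l'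



lemma wle_iff {u v : List ℕ} :
    wle u v ↔ u.length = v.length ∧ ∀ i, u.getD i 0 ≤ v.getD i 0 := by
  constructor
  · intro h
    refine ⟨h.length_eq, ?_⟩
    induction h with
    | nil => intro i; simp
    | cons hab h ih =>
      intro i
      cases i with
      | zero => simpa using hab
      | succ i => simpa using ih i
  · rintro ⟨hl, h⟩
    induction u generalizing v with
    | nil => cases v with
      | nil => exact List.Forall₂.nil
      | cons b v => simp at hl
    | cons a u ih =>
      cases v with
      | nil => simp at hl
      | cons b v =>
        refine List.Forall₂.cons (by simpa using h 0) (ih (by simpa using hl) (fun i => by simpa using h (i+1)))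

lemma eq_of_getD {u v : List ℕ} (hl : u.length = v.length)
    (h : ∀ i, u.getD i 0 = v.getD i 0) : u = v := by
  induction u generalizing v with
  | nil => cases v with
    | nil => rfl
    | cons b v => simp at hl
  | cons a u ih =>
    cases v with
    | nil => simp at hl
    | cons b v =>
      have h0 : a = b := by simpa using h 0
      rw [h0, ih (by simpa using hl) (fun i => by simpa using h (i+1))]

lemma wle_refl (u : List ℕ) : wle u u := List.forall₂_same.mpr (fun _ _ => le_refl _)

lemma wle_trans {u v w : List ℕ} (h1 : wle u v) (h2 : wle v w) : wle u w := by
  rw [wle_iff] at *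
  exact ⟨h1.1.trans h2.1, fun i => (h1.2 i).trans (h2.2 i)⟩

lemma wle_sum_le {u v : List ℕ} (h : wle u v) : u.sum ≤ v.sum := by
  induction h with
  | nil => simp
  | cons hab h ih => simpa using Nat.add_le_add hab ih

lemma wlt_sum_lt {u v : List ℕ} (h : wlt u v) : u.sum < v.sum := by
  obtain ⟨h, hne⟩ := h
  induction h with
  | nil => exact absurd rfl hne
  | @cons a b u v hab h ih =>
    rcases lt_or_eq_of_le hab with hab' | rfl
    · simpa using Nat.add_lt_add_of_lt_of_le hab' (wle_sum_le h)
    · have : u ≠ v := fun he => hne (by rw [he])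
      simpa using Nat.add_lt_add_left (ih this) a

lemma wle_antisymm {u v : List ℕ} (h1 : wle u v) (h2 : wle v u) : u = v := by
  by_contra hne
  exact absurd (wlt_sum_lt ⟨h1, hne⟩) (not_lt.mpr (wle_sum_le h2))

lemma diff_lt_length {u v : List ℕ} (hl : u.length = v.length) {m : ℕ}
    (h : u.getD m 0 ≠ v.getD m 0) : m < u.length := by
  by_contra hm
  push_neg at hm
  rw [List.getD_eq_default _ _ hm, List.getD_eq_default _ _ (hl ▸ hm)] at h
  exact h rfl

lemma getD_set_self {u : List ℕ} {i b : ℕ} (hi : i < u.length) :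
    (u.set i b).getD i 0 = b := by
  rw [List.getD_eq_getElem?_getD, List.getElem?_set, if_pos rfl, if_pos hi]; rfl

lemma getD_set_ne {u : List ℕ} {i j b : ℕ} (hij : i ≠ j) :
    (u.set i b).getD j 0 = u.getD j 0 := by
  rw [List.getD_eq_getElem?_getD, List.getElem?_set, if_neg hij, ← List.getD_eq_getElem?_getD]
section Part2
variable {S : Set (List ℕ)} {u v x y w : List ℕ}

lemma cover_char (hst : Straight S) (h : CoversIn S u v) :
    ∃ i < u.length, u.getD i 0 < v.getD i 0 ∧
      (∀ j, j ≠ i → u.getD j 0 = v.getD j 0) ∧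
      v = u.set i (v.getD i 0) ∧
      (∀ c, u.getD i 0 < c → c < v.getD i 0 → u.set i c ∉ S) := by
  obtain ⟨hu, hv, ⟨hle, hne⟩, hnex⟩ := h
  have hl : u.length = v.length := hle.length_eq
  obtain ⟨i, ⟨hi, hdiff⟩, huniq⟩ := hst u v ⟨hu, hv, ⟨hle, hne⟩, hnex⟩
  have hall : ∀ j, j ≠ i → u.getD j 0 = v.getD j 0 := by
    intro j hj
    by_contra hd
    exact hj (huniq j ⟨diff_lt_length hl hd, hd⟩)
  have hlt : u.getD i 0 < v.getD i 0 := lt_of_le_of_ne ((wle_iff.mp hle).2 i) hdiff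
  have hveq : v = u.set i (v.getD i 0) := by
    apply eq_of_getD (by rw [List.length_set, hl])
    intro j
    rcases eq_or_ne j i with rfl | hj
    · rw [getD_set_self hi]
    · rw [getD_set_ne (Ne.symm hj), hall j hj]
  refine ⟨i, hi, hlt, hall, hveq, ?_⟩
  intro c hc1 hc2 hcS
  apply hnex
  refine ⟨u.set i c, hcS, ⟨?_, ?_⟩, ⟨?_, ?_⟩⟩
  · rw [wle_iff]
    refine ⟨List.length_set.symm, fun j => ?_⟩
    rcases eq_or_ne j i with rfl | hj
    · rw [getD_set_self hi]; omega
    · rw [getD_set_ne (Ne.symm hj)]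
  · intro he
    have := congrArg (fun t => t.getD i 0) he
    simp only [getD_set_self hi] at this
    omega
  · rw [wle_iff]
    refine ⟨by rw [List.length_set, hl], fun j => ?_⟩
    rcases eq_or_ne j i with rfl | hj
    · rw [getD_set_self hi]; omega
    · rw [getD_set_ne (Ne.symm hj)]; exact (hall j hj).le
  · intro he
    have := congrArg (fun t => t.getD i 0) he
    simp only [getD_set_self hi] at this
    omega

lemma cover_mk {i b : ℕ} (hu : u ∈ S) (hi : i < u.length) (hb : u.getD i 0 < b)
    (hbS : u.set i b ∈ S) (hgap : ∀ c, u.getD i 0 < c → c < b → u.set i c ∉ S) :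
    CoversIn S u (u.set i b) := by
  have hwlt : wlt u (u.set i b) := by
    constructor
    · rw [wle_iff]
      refine ⟨List.length_set.symm, fun j => ?_⟩
      rcases eq_or_ne j i with rfl | hj
      · rw [getD_set_self hi]; omega
      · rw [getD_set_ne (Ne.symm hj)]
    · intro he
      have := congrArg (fun t => t.getD i 0) he
      simp only [getD_set_self hi] at this
      omega
  refine ⟨hu, hbS, hwlt, ?_⟩
  rintro ⟨w, hwS, ⟨hle1, hne1⟩, ⟨hle2, hne2⟩⟩
  have hl1 : u.length = w.length := hle1.length_eq
  have h1 := (wle_iff.mp hle1).2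
  have h2 := (wle_iff.mp hle2).2
  have hoff : ∀ j, j ≠ i → w.getD j 0 = u.getD j 0 := by
    intro j hj
    have := h2 j
    rw [getD_set_ne (Ne.symm hj)] at this
    exact le_antisymm this (h1 j)
  have hwi1 : u.getD i 0 ≤ w.getD i 0 := h1 i
  have hwi2 : w.getD i 0 ≤ b := by have := h2 i; rwa [getD_set_self hi] at this
  have hlt1 : u.getD i 0 < w.getD i 0 := by
    rcases lt_or_eq_of_le hwi1 with h | h
    · exact h
    · exfalso
      apply hne1
      apply eq_of_getD hl1
      intro j
      rcases eq_or_ne j i with rfl | hj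
      · exact h
      · exact (hoff j hj).symm
  have hlt2 : w.getD i 0 < b := by
    rcases lt_or_eq_of_le hwi2 with h | h
    · exact h
    · exfalso
      apply hne2
      apply eq_of_getD (by rw [hl1.symm, List.length_set])
      intro j
      rcases eq_or_ne j i with rfl | hj
      · rw [getD_set_self hi]; exact h
      · rw [getD_set_ne (Ne.symm hj)]; exact hoff j hj
  have hweq : w = u.set i (w.getD i 0) := by
    apply eq_of_getD (by rw [List.length_set, hl1])
    intro j
    rcases eq_or_ne j i with rfl | hj
    · rw [getD_set_self hi]
    · rw [getD_set_ne (Ne.symm hj)]; exact hoff j hj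
  exact hgap _ hlt1 hlt2 (hweq ▸ hwS)

lemma labelOf_iff {i : ℕ} (hi : i < u.length)
    (hdiff : u.getD i 0 ≠ v.getD i 0)
    (hall : ∀ j, j ≠ i → u.getD j 0 = v.getD j 0) :
    ∀ q, LabelOf (u, v) q ↔ q = (-((i:ℤ)+1), (u.getD i 0 : ℤ)) := by
  intro q
  constructor
  · rintro ⟨i', hi', hd', rfl⟩
    have : i' = i := by
      by_contra h
      exact hd' (hall i' h)
    rw [this]
  · rintro rfl
    exact ⟨i, hi, hdiff, rfl⟩
end Part2
section Part3
variable {S : Set (List ℕ)} {u v x y w : List ℕ}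

lemma labelSeq_singleton {a : List ℕ} {l : List (ℤ × ℤ)} (h : LabelSeq [a] l) : l = [] := by
  unfold LabelSeq at h
  simp only [List.tail_cons, List.zip_nil_right] at h
  exact (List.forall₂_nil_left_iff.mp h)

lemma labelSeq_cons {a b : List ℕ} {t : List (List ℕ)} {l : List (ℤ × ℤ)}
    (h : LabelSeq (a :: b :: t) l) :
    ∃ q l', l = q :: l' ∧ LabelOf (a, b) q ∧ LabelSeq (b :: t) l' := by
  unfold LabelSeq at h
  simp only [List.tail_cons, List.zip_cons_cons] at h
  rcases List.forall₂_cons_left_iff.mp h with ⟨q, l', hq, hl', rfl⟩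
  exact ⟨q, l', rfl, hq, hl'⟩

lemma labelSeq_cons_mk {a b : List ℕ} {t : List (List ℕ)} {q : ℤ × ℤ} {l' : List (ℤ × ℤ)}
    (hq : LabelOf (a, b) q) (h : LabelSeq (b :: t) l') : LabelSeq (a :: b :: t) (q :: l') := by
  unfold LabelSeq at *
  simp only [List.tail_cons, List.zip_cons_cons]
  exact List.Forall₂.cons hq h

lemma labelSeq_nil_mk (a : List ℕ) : LabelSeq [a] [] := by
  unfold LabelSeq
  simp only [List.tail_cons, List.zip_nil_right]
  exact List.Forall₂.nil

lemma satChain_ne_nil {c : List (List ℕ)} (h : IsSatChain S x y c) : c ≠ [] := by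
  intro hc; rw [hc] at h; simp [IsSatChain] at h

lemma satChain_head {a : List ℕ} {t : List (List ℕ)}
    (h : IsSatChain S x y (a :: t)) : a = x := by
  have := h.1; simp at this; exact this

lemma satChain_singleton {a : List ℕ} (h : IsSatChain S x y [a]) : a = x ∧ x = y := by
  obtain ⟨h1, h2, _⟩ := h
  simp at h1 h2
  exact ⟨h1, h1 ▸ h2⟩

lemma satChain_cons_cons {a b : List ℕ} {t : List (List ℕ)}
    (h : IsSatChain S x y (a :: b :: t)) :
    a = x ∧ CoversIn S a b ∧ IsSatChain S b y (b :: t) := by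
  obtain ⟨h1, h2, h3⟩ := h
  simp at h1
  rw [List.getLast?_cons_cons] at h2
  unfold List.Chain' at h3
  rw [List.isChain_cons_cons] at h3
  exact ⟨h1, h3.1, rfl, h2, h3.2⟩

lemma satChain_mono : ∀ {c : List (List ℕ)} {x y : List ℕ}, IsSatChain S x y c → wle x y := by
  intro c
  induction c with
  | nil => intro x y h; exact absurd rfl (satChain_ne_nil h)
  | cons a t ih =>
    intro x y h
    cases t with
    | nil =>
      obtain ⟨rfl, rfl⟩ := satChain_singleton h
      exact wle_refl _
    | cons b t =>
      obtain ⟨rfl, hcov, htail⟩ := satChain_cons_cons h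
      exact wle_trans hcov.2.2.1.1 (ih htail)

lemma satChain_eq_singleton {c : List (List ℕ)} (h : IsSatChain S x y c) (hxy : x = y) :
    c = [x] := by
  subst hxy
  cases c with
  | nil => exact absurd rfl (satChain_ne_nil h)
  | cons a t =>
    cases t with
    | nil => rw [satChain_head h]
    | cons b t =>
      obtain ⟨rfl, hcov, htail⟩ := satChain_cons_cons h
      exfalso
      have h1 := wlt_sum_lt hcov.2.2.1
      have h2 := wle_sum_le (satChain_mono htail)
      omega

lemma coord_frozen (hst : Straight S) :
    ∀ {c : List (List ℕ)} {l : List (ℤ × ℤ)} {x y : List ℕ} {m : ℕ},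
      IsSatChain S x y c → LabelSeq c l → (∀ q ∈ l, q.1 ≠ -((m:ℤ)+1)) →
      x.getD m 0 = y.getD m 0 := by
  intro c
  induction c with
  | nil => intro l x y m h; exact absurd rfl (satChain_ne_nil h)
  | cons a t ih =>
    intro l x y m h hl hfr
    cases t with
    | nil =>
      obtain ⟨rfl, rfl⟩ := satChain_singleton h
      rfl
    | cons b t =>
      obtain ⟨rfl, hcov, htail⟩ := satChain_cons_cons h
      obtain ⟨q, l', rfl, hq, hl'⟩ := labelSeq_cons hl
      obtain ⟨i, hi, hdiff, hall, _, _⟩ := cover_char hst hcov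
      obtain ⟨i', hi', hd', hqeq⟩ := hq
      have hii : i' = i := by
        by_contra hne
        exact hd' (hall i' hne)
      have him : i ≠ m := by
        intro hrfl
        apply hfr q (List.mem_cons_self)
        rw [hqeq, hii, hrfl]
      have h1 : a.getD m 0 = b.getD m 0 := hall m (Ne.symm him)
      have h2 : b.getD m 0 = y.getD m 0 :=
        ih htail hl' (fun q hq' => hfr q (List.mem_cons_of_mem _ hq'))
      rw [h1, h2]

lemma labels_shape (hst : Straight S) :
    ∀ {c : List (List ℕ)} {l : List (ℤ × ℤ)} {x y : List ℕ},
      IsSatChain S x y c → LabelSeq c l →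
      ∀ q ∈ l, ∃ m, m < x.length ∧ q.1 = -((m:ℤ)+1) ∧
        (x.getD m 0 : ℤ) ≤ q.2 ∧ q.2 < (y.getD m 0 : ℤ) := by
  intro c
  induction c with
  | nil => intro l x y h; exact absurd rfl (satChain_ne_nil h)
  | cons a t ih =>
    intro l x y h hl q hql
    cases t with
    | nil =>
      rw [labelSeq_singleton hl] at hql
      simp at hql
    | cons b t =>
      obtain ⟨rfl, hcov, htail⟩ := satChain_cons_cons h
      obtain ⟨q0, l', rfl, hq0, hl'⟩ := labelSeq_cons hl
      have hlby : wle b y := satChain_mono htail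
      have hlxb : wle a b := hcov.2.2.1.1
      have hlen : a.length = b.length := hlxb.length_eq
      obtain ⟨i, hi, hlt, hall, _, _⟩ := cover_char hst hcov
      rcases List.mem_cons.mp hql with rfl | hmem
      · obtain ⟨i', hi', hd', hqeq⟩ := hq0
        have hii : i' = i := by
          by_contra hne
          exact hd' (hall i' hne)
        subst hii
        refine ⟨i', hi', by rw [hqeq], by rw [hqeq], ?_⟩
        rw [hqeq]
        have : b.getD i' 0 ≤ y.getD i' 0 := (wle_iff.mp hlby).2 i'
        simp only []
        exact_mod_cast lt_of_lt_of_le hlt this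
      · obtain ⟨m, hm, h1, h2, h3⟩ := ih htail hl' q hmem
        refine ⟨m, by omega, h1, ?_, h3⟩
        have : a.getD m 0 ≤ b.getD m 0 := (wle_iff.mp hlxb).2 m
        calc (a.getD m 0 : ℤ) ≤ (b.getD m 0 : ℤ) := by exact_mod_cast this
          _ ≤ q.2 := h2

lemma lexLE_trans {p q r : ℤ × ℤ} (h1 : lexLE p q) (h2 : lexLE q r) : lexLE p r := by
  unfold lexLE at *
  omega

lemma chain'_all_le {q₀ : ℤ × ℤ} {l : List (ℤ × ℤ)}
    (h : List.Chain' lexLE (q₀ :: l)) : ∀ q ∈ l, lexLE q₀ q := by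
  induction l generalizing q₀ with
  | nil => simp
  | cons a l ih =>
    unfold List.Chain' at h
    rw [List.isChain_cons_cons] at h
    intro q hq
    rcases List.mem_cons.mp hq with rfl | hq
    · exact h.1
    · exact lexLE_trans h.1 (ih h.2 q hq)

lemma chain'_all_ge {q₀ : ℤ × ℤ} {l : List (ℤ × ℤ)}
    (h : List.Chain' (fun p q => lexLE q p) (q₀ :: l)) : ∀ q ∈ l, lexLE q q₀ := by
  induction l generalizing q₀ with
  | nil => simp
  | cons a l ih =>
    unfold List.Chain' at h
    rw [List.isChain_cons_cons] at h
    intro q hq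
    rcases List.mem_cons.mp hq with rfl | hq
    · exact h.1
    · exact lexLE_trans (ih h.2 q hq) h.1
end Part3
section Part4
variable {S : Set (List ℕ)} {x y w : List ℕ}

noncomputable def maxDiff (x y : List ℕ) : ℕ :=
  Nat.findGreatest (fun i => x.getD i 0 ≠ y.getD i 0) x.length

noncomputable def nextVal (S : Set (List ℕ)) (x y : List ℕ) : ℕ :=
  sInf {c | x.getD (maxDiff x y) 0 < c ∧ x.set (maxDiff x y) c ∈ S}

lemma labelSeq_cons' {a b : List ℕ} {t : List (List ℕ)} {q : ℤ × ℤ} {l' : List (ℤ × ℤ)}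
    (h : LabelSeq (a :: b :: t) (q :: l')) : LabelOf (a, b) q ∧ LabelSeq (b :: t) l' := by
  obtain ⟨q2, l2, heq, h1, h2⟩ := labelSeq_cons h
  injection heq with e1 e2
  subst e1; subst e2
  exact ⟨h1, h2⟩

lemma getD_mix {x y : List ℕ} (i j : ℕ) (hi : i ≤ x.length) :
    (x.take i ++ y.drop i).getD j 0 = if j < i then x.getD j 0 else y.getD j 0 := by
  have hti : (x.take i).length = i := by rw [List.length_take]; omega
  split_ifs with hj
  · rw [List.getD_append _ _ _ _ (by rw [hti]; exact hj)]
    rw [List.getD_eq_getElem?_getD, List.getElem?_take, if_pos hj,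
      ← List.getD_eq_getElem?_getD]
  · push_neg at hj
    rw [List.getD_append_right _ _ _ _ (by rw [hti]; exact hj), hti,
      List.getD_eq_getElem?_getD, List.getElem?_drop, ← List.getD_eq_getElem?_getD]
    congr 1
    omega

lemma maxDiff_spec (hxy : wle x y) (hne : x ≠ y) :
    maxDiff x y < x.length ∧ x.getD (maxDiff x y) 0 ≠ y.getD (maxDiff x y) 0 ∧
      ∀ j, maxDiff x y < j → x.getD j 0 = y.getD j 0 := by
  have hl : x.length = y.length := hxy.length_eq
  have hdiff : ∃ j, x.getD j 0 ≠ y.getD j 0 := by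
    by_contra h
    push_neg at h
    exact hne (eq_of_getD hl h)
  obtain ⟨j₀, hj₀⟩ := hdiff
  have hj₀l : j₀ < x.length := diff_lt_length hl hj₀
  have hP : x.getD (maxDiff x y) 0 ≠ y.getD (maxDiff x y) 0 := by
    unfold maxDiff
    exact Nat.findGreatest_spec (P := fun i => x.getD i 0 ≠ y.getD i 0) (le_of_lt hj₀l) hj₀
  refine ⟨diff_lt_length hl hP, hP, ?_⟩
  intro j hj
  rcases le_or_gt j x.length with hjl | hjl
  · by_contra hd
    unfold maxDiff at hj
    exact (Nat.findGreatest_is_greatest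
      (P := fun i => x.getD i 0 ≠ y.getD i 0) hj hjl) hd
  · rw [List.getD_eq_default _ _ (le_of_lt hjl), List.getD_eq_default _ _ (by omega)]

lemma coated_mem (hco : Coated S) (hx : x ∈ S) (hy : y ∈ S) (hxy : wle x y)
    (hne : x ≠ y) : x.set (maxDiff x y) (y.getD (maxDiff x y) 0) ∈ S := by
  obtain ⟨hi, hd, hgt⟩ := maxDiff_spec hxy hne
  set i := maxDiff x y with hidef
  have hl : x.length = y.length := hxy.length_eq
  rcases Nat.eq_zero_or_pos i with hz | hpos
  · have : x.set i (y.getD i 0) = y := by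
      apply eq_of_getD (by rw [List.length_set, hl])
      intro j
      rcases eq_or_ne j i with rfl | hj
      · rw [getD_set_self hi]
      · rw [getD_set_ne (Ne.symm hj)]
        exact hgt j (by omega)
    rw [this]; exact hy
  · have hkey : x.set i (y.getD i 0) = x.take i ++ y.drop i := by
      apply eq_of_getD
      · rw [List.length_set, List.length_append, List.length_take, List.length_drop]
        omega
      · intro j
        rw [getD_mix i j (by omega)]
        split_ifs with hj
        · rw [getD_set_ne (by omega)]
        · rcases eq_or_ne j i with rfl | hji
          · rw [getD_set_self hi]
          · rw [getD_set_ne (Ne.symm hji)]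
            exact hgt j (by omega)
    rw [hkey]
    exact hco x y hx hy hxy i hpos (by omega)

lemma step_core (hco : Coated S) (hx : x ∈ S) (hy : y ∈ S) (hxy : wle x y)
    (hne : x ≠ y) :
    x.getD (maxDiff x y) 0 < nextVal S x y ∧ nextVal S x y ≤ y.getD (maxDiff x y) 0 ∧
      x.set (maxDiff x y) (nextVal S x y) ∈ S ∧
      CoversIn S x (x.set (maxDiff x y) (nextVal S x y)) ∧
      wle (x.set (maxDiff x y) (nextVal S x y)) y ∧
      x.sum < (x.set (maxDiff x y) (nextVal S x y)).sum := by
  obtain ⟨hi, hd, hgt⟩ := maxDiff_spec hxy hne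
  have hl : x.length = y.length := hxy.length_eq
  have hnv : nextVal S x y =
      sInf {c | x.getD (maxDiff x y) 0 < c ∧ x.set (maxDiff x y) c ∈ S} := rfl
  have hxiyi : x.getD (maxDiff x y) 0 < y.getD (maxDiff x y) 0 :=
    lt_of_le_of_ne ((wle_iff.mp hxy).2 _) hd
  have hyT : y.getD (maxDiff x y) 0 ∈
      {c | x.getD (maxDiff x y) 0 < c ∧ x.set (maxDiff x y) c ∈ S} :=
    ⟨hxiyi, coated_mem hco hx hy hxy hne⟩
  have hbT : nextVal S x y ∈
      {c | x.getD (maxDiff x y) 0 < c ∧ x.set (maxDiff x y) c ∈ S} := by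
    rw [hnv]; exact Nat.sInf_mem ⟨_, hyT⟩
  have hble : nextVal S x y ≤ y.getD (maxDiff x y) 0 := by
    rw [hnv]; exact Nat.sInf_le hyT
  have hcov : CoversIn S x (x.set (maxDiff x y) (nextVal S x y)) := by
    apply cover_mk hx hi hbT.1 hbT.2
    intro c hc1 hc2 hcS
    have : nextVal S x y ≤ c := by rw [hnv]; exact Nat.sInf_le ⟨hc1, hcS⟩
    omega
  refine ⟨hbT.1, hble, hbT.2, hcov, ?_, wlt_sum_lt hcov.2.2.1⟩
  rw [wle_iff]
  refine ⟨by rw [List.length_set, hl], fun j => ?_⟩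
  rcases eq_or_ne j (maxDiff x y) with rfl | hj
  · rw [getD_set_self hi]; exact hble
  · rw [getD_set_ne (Ne.symm hj)]; exact (wle_iff.mp hxy).2 j

lemma first_forced (hst : Straight S) (hxy : wle x y)
    (hne : x ≠ y) {t : List (List ℕ)} {q₀ : ℤ × ℤ}
    (hch : IsSatChain S x y (x :: w :: t)) (hq : LabelOf (x, w) q₀) :
    ∃ j, j < x.length ∧ x.getD j 0 < y.getD j 0 ∧
      q₀ = (-((j:ℤ)+1), (x.getD j 0 : ℤ)) ∧ j ≤ maxDiff x y ∧
      (j = maxDiff x y → w = x.set (maxDiff x y) (nextVal S x y)) := by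
  obtain ⟨-, hcov, htail⟩ := satChain_cons_cons hch
  obtain ⟨j, hj, hlt, hall, hveq, hgap⟩ := cover_char hst hcov
  have hq₀ : q₀ = (-((j:ℤ)+1), (x.getD j 0 : ℤ)) :=
    ((labelOf_iff hj (Nat.ne_of_lt hlt) hall q₀).mp hq)
  have hwy : wle w y := satChain_mono htail
  have hjy : x.getD j 0 < y.getD j 0 :=
    lt_of_lt_of_le hlt ((wle_iff.mp hwy).2 j)
  obtain ⟨hi, hd, hgt⟩ := maxDiff_spec hxy hne
  have hjle : j ≤ maxDiff x y := by
    by_contra h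
    push_neg at h
    exact absurd (hgt j h) (by omega)
  refine ⟨j, hj, hjy, hq₀, hjle, ?_⟩
  intro hjeq
  rw [← hjeq]
  have hnv : nextVal S x y =
      sInf {c | x.getD j 0 < c ∧ x.set j c ∈ S} := by
    have : nextVal S x y =
        sInf {c | x.getD (maxDiff x y) 0 < c ∧ x.set (maxDiff x y) c ∈ S} := rfl
    rw [this, ← hjeq]
  have hwT : w.getD j 0 ∈ {c | x.getD j 0 < c ∧ x.set j c ∈ S} := by
    refine ⟨hlt, ?_⟩
    rw [← hveq]
    exact hcov.2.1
  have hble : nextVal S x y ≤ w.getD j 0 := by rw [hnv]; exact Nat.sInf_le hwT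
  have hbT : nextVal S x y ∈ {c | x.getD j 0 < c ∧ x.set j c ∈ S} := by
    rw [hnv]; exact Nat.sInf_mem ⟨_, hwT⟩
  have hbeq : nextVal S x y = w.getD j 0 := by
    rcases lt_or_eq_of_le hble with h | h
    · exact absurd hbT.2 (hgap _ hbT.1 h)
    · exact h
  rw [hbeq]
  exact hveq

lemma inc_first (hst : Straight S) (hxy : wle x y)
    (hne : x ≠ y) {t : List (List ℕ)} {q₀ : ℤ × ℤ} {l' : List (ℤ × ℤ)}
    (hch : IsSatChain S x y (x :: w :: t)) (hl : LabelSeq (x :: w :: t) (q₀ :: l'))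
    (hinc : List.Chain' lexLE (q₀ :: l')) :
    w = x.set (maxDiff x y) (nextVal S x y) ∧
      q₀ = (-((maxDiff x y : ℤ)+1), (x.getD (maxDiff x y) 0 : ℤ)) := by
  obtain ⟨hq, hltail⟩ := labelSeq_cons' hl
  obtain ⟨j, hj, hjy, hq₀, hjle, hjmax⟩ := first_forced hst hxy hne hch hq
  obtain ⟨-, hcov, htail⟩ := satChain_cons_cons hch
  obtain ⟨hi, hd, hgt⟩ := maxDiff_spec hxy hne
  have hjge : maxDiff x y ≤ j := by
    by_contra h
    push_neg at h
    apply hd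
    apply coord_frozen hst hch hl
    intro q hql
    rcases List.mem_cons.mp hql with rfl | hmem
    · rw [hq₀]
      intro hcon
      simp at hcon
      omega
    · obtain ⟨m, hm, hq1, hq2, hq3⟩ := labels_shape hst htail hltail q hmem
      have hle' := chain'_all_le hinc q hmem
      rw [hq₀] at hle'
      have hmj : m ≤ j := by
        unfold lexLE at hle'
        rcases hle' with h1 | h1
        · rw [hq1] at h1; simp at h1; omega
        · rw [hq1] at h1
          have := h1.1
          simp at this
          omega
      rw [hq1]
      intro hc
      have : (m:ℤ) = (maxDiff x y : ℤ) := by omega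
      have : m = maxDiff x y := by exact_mod_cast this
      omega
  have hjeq : j = maxDiff x y := le_antisymm hjle hjge
  exact ⟨hjmax hjeq, hjeq ▸ hq₀⟩
end Part4
section Part5
variable {S : Set (List ℕ)} {x y w : List ℕ}

noncomputable def minDiff (x y : List ℕ) : ℕ := sInf {m | x.getD m 0 ≠ y.getD m 0}

lemma satChain_two {c : List (List ℕ)} (h : IsSatChain S x y c) (hne : x ≠ y) :
    ∃ w t, c = x :: w :: t := by
  cases c with
  | nil => exact absurd rfl (satChain_ne_nil h)
  | cons a t =>
    cases t with
    | nil =>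
      obtain ⟨rfl, h2⟩ := satChain_singleton h
      exact absurd h2 hne
    | cons b t =>
      obtain ⟨rfl, -, -⟩ := satChain_cons_cons h
      exact ⟨b, t, rfl⟩

lemma dec_first (hst : Straight S) {t : List (List ℕ)} {q₀ : ℤ × ℤ} {l' : List (ℤ × ℤ)}
    (hch : IsSatChain S x y (x :: w :: t)) (hl : LabelSeq (x :: w :: t) (q₀ :: l'))
    (hdec : List.Chain' (fun p q => lexLE q p) (q₀ :: l')) :
    w = x.set (minDiff x y) (y.getD (minDiff x y) 0) := by
  obtain ⟨hq, hltail⟩ := labelSeq_cons' hl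
  obtain ⟨-, hcov, htail⟩ := satChain_cons_cons hch
  obtain ⟨j, hj, hlt, hall, hveq, hgap⟩ := cover_char hst hcov
  have hq₀ : q₀ = (-((j:ℤ)+1), (x.getD j 0 : ℤ)) :=
    ((labelOf_iff hj (Nat.ne_of_lt hlt) hall q₀).mp hq)
  have hwy : wle w y := satChain_mono htail
  have htl : ∀ q ∈ l', ∀ p : ℕ, p ≤ j → q.1 ≠ -((p:ℤ)+1) := by
    intro q hmem p hp
    obtain ⟨m, hm, hq1, hq2, hq3⟩ := labels_shape hst htail hltail q hmem
    have hge := chain'_all_ge hdec q hmem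
    have hq₀1 : q₀.1 = -((j:ℤ)+1) := by rw [hq₀]
    have hq₀2 : q₀.2 = (x.getD j 0 : ℤ) := by rw [hq₀]
    unfold lexLE at hge
    rw [hq₀1, hq₀2, hq1] at hge
    have hmgtj : j < m := by
      rcases hge with h1 | ⟨h1, h2⟩
      · omega
      · exfalso
        have hmj : m = j := by omega
        subst hmj
        omega
    rw [hq1]
    intro hc
    have : (m:ℤ) = (p:ℤ) := by omega
    have : m = p := by exact_mod_cast this
    omega
  have hfr : ∀ p, p ≤ j → w.getD p 0 = y.getD p 0 := fun p hp =>
    coord_frozen hst htail hltail (fun q hq' => htl q hq' p hp)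
  have hwj : w.getD j 0 = y.getD j 0 := hfr j le_rfl
  have hjD : j ∈ {m | x.getD m 0 ≠ y.getD m 0} := by
    simp only [Set.mem_setOf_eq]
    omega
  have hmin : ∀ m, x.getD m 0 ≠ y.getD m 0 → j ≤ m := by
    intro m hm
    by_contra h
    push_neg at h
    exact hm (by rw [hall m (by omega), hfr m (by omega)])
  have hminD : minDiff x y = j := by
    have h1 : minDiff x y ≤ j := Nat.sInf_le hjD
    have h2 : j ≤ minDiff x y := hmin _ (Nat.sInf_mem ⟨j, hjD⟩)
    omega
  rw [hminD, ← hwj]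
  exact hveq
end Part5
section Part6
variable {S : Set (List ℕ)}

lemma satChain_single_mk (x : List ℕ) : IsSatChain S x x [x] :=
  ⟨rfl, rfl, List.isChain_singleton x⟩

lemma exists_inc (hst : Straight S) (hco : Coated S) :
    ∀ k x y, x ∈ S → y ∈ S → wle x y → y.sum ≤ x.sum + k →
    ∃ c l, IsSatChain S x y c ∧ LabelSeq c l ∧ List.Chain' lexLE l ∧
      ∀ q ∈ l.head?, ∃ j, j < x.length ∧ x.getD j 0 ≠ y.getD j 0 ∧
        q = (-((j:ℤ)+1), (x.getD j 0 : ℤ)) := by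
  intro k
  induction k with
  | zero =>
    intro x y hx hy hxy hsum
    have hxy' : x = y := by
      by_contra hne
      exact absurd (wlt_sum_lt ⟨hxy, hne⟩) (by omega)
    subst hxy'
    exact ⟨[x], [], satChain_single_mk x, labelSeq_nil_mk x, List.isChain_nil, by simp⟩
  | succ k ih =>
    intro x y hx hy hxy hsum
    by_cases hne : x = y
    · subst hne
      exact ⟨[x], [], satChain_single_mk x, labelSeq_nil_mk x, List.isChain_nil, by simp⟩
    · obtain ⟨hlt, hble, hx'S, hcov, hx'y, hsumlt⟩ := step_core hco hx hy hxy hne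
      obtain ⟨hi, hd, hgt⟩ := maxDiff_spec hxy hne
      set i := maxDiff x y with hidef
      set x' := x.set i (nextVal S x y) with hx'def
      obtain ⟨c, l, hc, hlc, hinc, hhead⟩ := ih x' y hx'S hy hx'y (by omega)
      obtain ⟨a, t, rfl⟩ : ∃ a t, c = a :: t := by
        cases c with
        | nil => exact absurd rfl (satChain_ne_nil hc)
        | cons a t => exact ⟨a, t, rfl⟩
      have ha : a = x' := satChain_head hc
      subst ha
      have hx'i : x'.getD i 0 = nextVal S x y := getD_set_self hi
      have hx'ne : ∀ j, j ≠ i → x'.getD j 0 = x.getD j 0 :=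
        fun j hj => getD_set_ne (Ne.symm hj)
      have hlab : LabelOf (x, x') (-((i:ℤ)+1), (x.getD i 0 : ℤ)) := by
        refine ⟨i, hi, ?_, rfl⟩
        show x.getD i 0 ≠ x'.getD i 0
        rw [hx'i]
        omega
      refine ⟨x :: x' :: t, (-((i:ℤ)+1), (x.getD i 0 : ℤ)) :: l, ?_, ?_, ?_, ?_⟩
      · refine ⟨rfl, ?_, ?_⟩
        · rw [List.getLast?_cons_cons]
          exact hc.2.1
        · unfold List.Chain'
          rw [List.isChain_cons_cons]
          exact ⟨hcov, hc.2.2⟩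
      · exact labelSeq_cons_mk hlab hlc
      · unfold List.Chain'
        rw [List.isChain_cons]
        refine ⟨?_, hinc⟩
        intro q hq
        obtain ⟨j, hjlen, hjd, rfl⟩ := hhead q hq
        have hji : j ≤ i := by
          by_contra h
          push_neg at h
          exact hjd (by rw [hx'ne j (by omega), hgt j h])
        rcases lt_or_eq_of_le hji with h | h
        · left
          simp
          omega
        · subst h
          right
          constructor
          · rfl
          · simp only [hx'i]
            exact_mod_cast le_of_lt hlt
      · intro q hq
        simp only [List.head?_cons, Option.mem_def, Option.some.injEq] at hq
        subst hq
        exact ⟨i, hi, hd, rfl⟩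

lemma uniq_inc (hst : Straight S) :
    ∀ k x y, x ∈ S → y ∈ S → y.sum ≤ x.sum + k →
    ∀ c₁ l₁ c₂ l₂, IsSatChain S x y c₁ → LabelSeq c₁ l₁ → List.Chain' lexLE l₁ →
      IsSatChain S x y c₂ → LabelSeq c₂ l₂ → List.Chain' lexLE l₂ → c₁ = c₂ := by
  intro k
  induction k with
  | zero =>
    intro x y hx hy hsum c₁ l₁ c₂ l₂ hc1 hl1 hi1 hc2 hl2 hi2
    have hxy := satChain_mono hc1
    have hxy' : x = y := by
      by_contra hne
      exact absurd (wlt_sum_lt ⟨hxy, hne⟩) (by omega)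
    rw [satChain_eq_singleton hc1 hxy', satChain_eq_singleton hc2 hxy']
  | succ k ih =>
    intro x y hx hy hsum c₁ l₁ c₂ l₂ hc1 hl1 hi1 hc2 hl2 hi2
    have hxy := satChain_mono hc1
    by_cases hne : x = y
    · rw [satChain_eq_singleton hc1 hne, satChain_eq_singleton hc2 hne]
    · obtain ⟨w₁, t₁, rfl⟩ := satChain_two hc1 hne
      obtain ⟨w₂, t₂, rfl⟩ := satChain_two hc2 hne
      obtain ⟨q₁, l₁', rfl, -, -⟩ := labelSeq_cons hl1
      obtain ⟨q₂, l₂', rfl, -, -⟩ := labelSeq_cons hl2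
      obtain ⟨hw₁, -⟩ := inc_first hst hxy hne hc1 hl1 hi1
      obtain ⟨hw₂, -⟩ := inc_first hst hxy hne hc2 hl2 hi2
      subst hw₁
      subst hw₂
      obtain ⟨-, hcov, htail₁⟩ := satChain_cons_cons hc1
      obtain ⟨-, -, htail₂⟩ := satChain_cons_cons hc2
      obtain ⟨-, hlt₁⟩ := labelSeq_cons' hl1
      obtain ⟨-, hlt₂⟩ := labelSeq_cons' hl2
      have hsum' : x.sum < (x.set (maxDiff x y) (nextVal S x y)).sum :=
        wlt_sum_lt hcov.2.2.1
      have := ih (x.set (maxDiff x y) (nextVal S x y)) y hcov.2.1 hy (by omega)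
        _ l₁' _ l₂' htail₁ hlt₁ ((List.isChain_cons.mp hi1).2)
        htail₂ hlt₂ ((List.isChain_cons.mp hi2).2)
      rw [this]

lemma min_inc (hst : Straight S) :
    ∀ k x y, x ∈ S → y ∈ S → y.sum ≤ x.sum + k →
    ∀ c l, IsSatChain S x y c → LabelSeq c l → List.Chain' lexLE l →
    ∀ c' l', IsSatChain S x y c' → LabelSeq c' l' → seqLexLE l l' := by
  intro k
  induction k with
  | zero =>
    intro x y hx hy hsum c l hc hl hi c' l' hc' hl'
    have hxy := satChain_mono hc
    have hxy' : x = y := by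
      by_contra hne
      exact absurd (wlt_sum_lt ⟨hxy, hne⟩) (by omega)
    have e1 : c = [x] := satChain_eq_singleton hc hxy'
    have e2 : c' = [x] := satChain_eq_singleton hc' hxy'
    subst e1; subst e2
    right
    rw [labelSeq_singleton hl, labelSeq_singleton hl']
  | succ k ih =>
    intro x y hx hy hsum c l hc hl hi c' l' hc' hl'
    have hxy := satChain_mono hc
    by_cases hne : x = y
    · have e1 : c = [x] := satChain_eq_singleton hc hne
      have e2 : c' = [x] := satChain_eq_singleton hc' hne
      subst e1; subst e2
      right
      rw [labelSeq_singleton hl, labelSeq_singleton hl']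
    · obtain ⟨w₁, t₁, rfl⟩ := satChain_two hc hne
      obtain ⟨w₂, t₂, rfl⟩ := satChain_two hc' hne
      obtain ⟨q₁, l₁', rfl, -, -⟩ := labelSeq_cons hl
      obtain ⟨q₂, l₂', rfl, hq₂, -⟩ := labelSeq_cons hl'
      obtain ⟨hw₁, hq₁eq⟩ := inc_first hst hxy hne hc hl hi
      subst hw₁
      obtain ⟨j, hjlen, hjlt, hq₂eq, hjle, hjmax⟩ := first_forced hst hxy hne hc' hq₂
      rcases lt_or_eq_of_le hjle with hj | hj
      · left
        apply List.Lex.rel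
        rw [hq₁eq, hq₂eq]
        unfold lexLT
        left
        simp
        omega
      · have hw₂ : w₂ = x.set (maxDiff x y) (nextVal S x y) := hjmax hj
        subst hw₂
        have hq12 : q₁ = q₂ := by rw [hq₁eq, hq₂eq, hj]
        obtain ⟨-, hcov, htail₁⟩ := satChain_cons_cons hc
        obtain ⟨-, -, htail₂⟩ := satChain_cons_cons hc'
        obtain ⟨-, hlt₁⟩ := labelSeq_cons' hl
        obtain ⟨-, hlt₂⟩ := labelSeq_cons' hl'
        have hsum' : x.sum < (x.set (maxDiff x y) (nextVal S x y)).sum :=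
          wlt_sum_lt hcov.2.2.1
        have hrec := ih (x.set (maxDiff x y) (nextVal S x y)) y hcov.2.1 hy (by omega)
          _ l₁' htail₁ hlt₁ ((List.isChain_cons.mp hi).2) _ l₂' htail₂ hlt₂
        rcases hrec with hlex | heq
        · left
          rw [hq12]
          exact List.Lex.cons hlex
        · right
          rw [hq12, heq]

lemma uniq_dec (hst : Straight S) :
    ∀ k x y, y.sum ≤ x.sum + k →
    ∀ c₁ l₁ c₂ l₂, IsSatChain S x y c₁ → LabelSeq c₁ l₁ →
      List.Chain' (fun p q => lexLE q p) l₁ →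
      IsSatChain S x y c₂ → LabelSeq c₂ l₂ →
      List.Chain' (fun p q => lexLE q p) l₂ → c₁ = c₂ := by
  intro k
  induction k with
  | zero =>
    intro x y hsum c₁ l₁ c₂ l₂ hc1 hl1 hi1 hc2 hl2 hi2
    have hxy := satChain_mono hc1
    have hxy' : x = y := by
      by_contra hne
      exact absurd (wlt_sum_lt ⟨hxy, hne⟩) (by omega)
    rw [satChain_eq_singleton hc1 hxy', satChain_eq_singleton hc2 hxy']
  | succ k ih =>
    intro x y hsum c₁ l₁ c₂ l₂ hc1 hl1 hi1 hc2 hl2 hi2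
    have hxy := satChain_mono hc1
    by_cases hne : x = y
    · rw [satChain_eq_singleton hc1 hne, satChain_eq_singleton hc2 hne]
    · obtain ⟨w₁, t₁, rfl⟩ := satChain_two hc1 hne
      obtain ⟨w₂, t₂, rfl⟩ := satChain_two hc2 hne
      obtain ⟨q₁, l₁', rfl, -, -⟩ := labelSeq_cons hl1
      obtain ⟨q₂, l₂', rfl, -, -⟩ := labelSeq_cons hl2
      have hw₁ := dec_first hst hc1 hl1 hi1
      have hw₂ := dec_first hst hc2 hl2 hi2
      subst hw₁
      subst hw₂
      obtain ⟨-, hcov, htail₁⟩ := satChain_cons_cons hc1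
      obtain ⟨-, -, htail₂⟩ := satChain_cons_cons hc2
      obtain ⟨-, hlt₁⟩ := labelSeq_cons' hl1
      obtain ⟨-, hlt₂⟩ := labelSeq_cons' hl2
      have hsum' : x.sum < (x.set (minDiff x y) (y.getD (minDiff x y) 0)).sum :=
        wlt_sum_lt hcov.2.2.1
      have := ih (x.set (minDiff x y) (y.getD (minDiff x y) 0)) y (by omega)
        _ l₁' _ l₂' htail₁ hlt₁ ((List.isChain_cons.mp hi1).2)
        htail₂ hlt₂ ((List.isChain_cons.mp hi2).2)
      rw [this]
end Part6

/-- The labeling `λ` is an EL-labeling of `S(n)`: every interval has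
exactly one maximal chain with weakly increasing label sequence, this chain has
lexicographically minimal label sequence among all maximal chains of the interval,
and between any two elements there is at most one maximal chain with weakly
decreasing label sequence. -/
theorem stmt0 (δ : ℕ → ℕ) (S : Set (List ℕ)) (hgr : ∀ u ∈ S, IsCliff δ u)
    (hst : Straight S) (hco : Coated S) (n : ℕ)
    (x y : List ℕ) (hx : x ∈ S) (hy : y ∈ S)
    (hxn : x.length = n) (hyn : y.length = n) (hxy : wle x y) :
    (∃! c : List (List ℕ),
        IsSatChain S x y c ∧ ∃ l, LabelSeq c l ∧ List.Chain' lexLE l) ∧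
    (∀ c l, IsSatChain S x y c → LabelSeq c l → List.Chain' lexLE l →
      ∀ c' l', IsSatChain S x y c' → LabelSeq c' l' → seqLexLE l l') ∧
    (∀ x' y' : List ℕ, x' ∈ S → y' ∈ S → x'.length = n → y'.length = n →
      ∀ c₁ c₂, IsSatChain S x' y' c₁ → IsSatChain S x' y' c₂ →
      (∃ l₁, LabelSeq c₁ l₁ ∧ List.Chain' (fun p q => lexLE q p) l₁) →
      (∃ l₂, LabelSeq c₂ l₂ ∧ List.Chain' (fun p q => lexLE q p) l₂) →
      c₁ = c₂) := by
  refine ⟨?_, ?_, ?_⟩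
  · obtain ⟨c, l, hc, hl, hinc, -⟩ :=
      exists_inc hst hco y.sum x y hx hy hxy (by omega)
    refine ⟨c, ⟨hc, l, hl, hinc⟩, ?_⟩
    rintro c' ⟨hc', l', hl', hinc'⟩
    exact uniq_inc hst y.sum x y hx hy (by omega) c' l' c l hc' hl' hinc' hc hl hinc
  · intro c l hc hl hinc c' l' hc' hl'
    exact min_inc hst y.sum x y hx hy (by omega) c l hc hl hinc c' l' hc' hl'
  · rintro x' y' hx' hy' - - c₁ c₂ h1 h2 ⟨l₁, hl₁, hd₁⟩ ⟨l₂, hl₂, hd₂⟩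
    exact uniq_dec hst y'.sum x' y' (by omega) c₁ l₁ c₂ l₂ h1 hl₁ hd₁ h2 hl₂ hd₂
end

section
/- Let δ be a range map and S a graded subset of Cl_δ that is closed by prefix. Then: (i) for every n ≥ 0, the S-elevation map e_S : S(n) → Cl_δ(n) is injective; (ii) the image E_S := {e_S(u) : u ∈ S} is closed by prefix; (iii) if for all u, v ∈ S of equal size with u ≼ v and all a ∈ ℕ, va ∈ S implies ua ∈ S, then for all n ≥ 0 and all u, v ∈ S(n), e_S(u) ≼ e_S(v) implies u ≼ v (i.e., the inverse of e_S is a poset morphism from E_S(n) to S(n)). -/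
noncomputable def cnt (S : Set (List ℕ)) (p : List ℕ) (x : ℕ) : ℕ :=
  Set.ncard {a | a < x ∧ p ++ [a] ∈ S}

lemma cnt_finite (S : Set (List ℕ)) (p : List ℕ) (x : ℕ) :
    {a | a < x ∧ p ++ [a] ∈ S}.Finite :=
  (Set.finite_Iio x).subset fun _ ha => ha.1

lemma cnt_mono (S : Set (List ℕ)) (p : List ℕ) {x y : ℕ} (h : x ≤ y) :
    cnt S p x ≤ cnt S p y :=
  Set.ncard_le_ncard (fun _ ha => ⟨lt_of_lt_of_le ha.1 h, ha.2⟩) (cnt_finite S p y)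

lemma cnt_strict (S : Set (List ℕ)) (p : List ℕ) {b x : ℕ}
    (hb : p ++ [b] ∈ S) (h : b < x) : cnt S p b < cnt S p x := by
  have hsub : insert b {a | a < b ∧ p ++ [a] ∈ S} ⊆ {a | a < x ∧ p ++ [a] ∈ S} := by
    intro a ha
    rcases ha with rfl | ha
    · exact ⟨h, hb⟩
    · exact ⟨ha.1.trans h, ha.2⟩
  have h2 : cnt S p b < (insert b {a | a < b ∧ p ++ [a] ∈ S}).ncard := by
    rw [Set.ncard_insert_of_notMem (by simp) (cnt_finite S p b)]
    exact Nat.lt_succ_self _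
  exact h2.trans_le (Set.ncard_le_ncard hsub (cnt_finite S p x))

lemma cnt_cmp (S : Set (List ℕ)) {p q : List ℕ}
    (h : ∀ a, q ++ [a] ∈ S → p ++ [a] ∈ S) (x : ℕ) : cnt S q x ≤ cnt S p x :=
  Set.ncard_le_ncard (fun _ ha => ⟨ha.1, h _ ha.2⟩) (cnt_finite S p x)

lemma elev_length (S : Set (List ℕ)) (u : List ℕ) : (elev S u).length = u.length := by
  simp [elev]

lemma elev_getElem (S : Set (List ℕ)) (u : List ℕ) (i : ℕ) (h : i < u.length) :
    (elev S u)[i]'(by rw [elev_length]; exact h) = cnt S (u.take i) (u.getD i 0) := by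
  simp [elev, cnt]

lemma take_mem {S : Set (List ℕ)} (hpre : ClosedByPrefix S) {u : List ℕ}
    (hu : u ∈ S) (k : ℕ) : u.take k ∈ S :=
  hpre _ (u.drop k) (by rw [List.take_append_drop]; exact hu)

lemma take_succ_mem {S : Set (List ℕ)} (hpre : ClosedByPrefix S) {u : List ℕ}
    (hu : u ∈ S) {i : ℕ} (h : i < u.length) : u.take i ++ [u[i]] ∈ S := by
  have := take_mem hpre hu (i+1)
  rwa [List.take_succ, List.getElem?_eq_getElem h] at this

lemma elev_take (S : Set (List ℕ)) (u : List ℕ) (m : ℕ) (hm : m ≤ u.length) :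
    elev S (u.take m) = (elev S u).take m := by
  apply List.ext_getElem
  · simp [elev_length]
  · intro i h1 h2
    have him : i < m := by simp [elev_length] at h2; omega
    have hiu : i < u.length := lt_of_lt_of_le him hm
    rw [List.getElem_take, elev_getElem S u i hiu,
      elev_getElem S (u.take m) i (by simp; omega)]
    congr 1
    · rw [List.take_take]; congr 1; omega
    · rw [List.getD_eq_getElem _ _ (by simp; omega), List.getD_eq_getElem _ _ hiu,
        List.getElem_take]


/-- Properties of the elevation map: (i) it is injective on `S`;
(ii) its image is closed by prefix; (iii) under the extra hypothesis,
`e_S(u) ≼ e_S(v)` implies `u ≼ v`, i.e. `e_S⁻¹` is a poset morphism from the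
elevation image to `S(n)`. -/
theorem stmt3 (δ : ℕ → ℕ) (S : Set (List ℕ)) (hgr : ∀ u ∈ S, IsCliff δ u)
    (hpre : ClosedByPrefix S) :
    (∀ u ∈ S, ∀ v ∈ S, elev S u = elev S v → u = v) ∧
    ClosedByPrefix {w | ∃ u ∈ S, elev S u = w} ∧
    ((∀ u ∈ S, ∀ v ∈ S, wle u v → ∀ a : ℕ, v ++ [a] ∈ S → u ++ [a] ∈ S) →
      ∀ u ∈ S, ∀ v ∈ S, wle (elev S u) (elev S v) → wle u v) := by
  refine ⟨?_, ?_, ?_⟩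
  · -- (i) injectivity
    intro u hu v hv he
    have hlen : u.length = v.length := by
      have := congrArg List.length he; simpa [elev_length] using this
    have key : ∀ i, u.take i = v.take i := by
      intro i
      induction i with
      | zero => simp
      | succ i ih =>
        by_cases hi : i < u.length
        · have hiv : i < v.length := hlen ▸ hi
          have h1 : (elev S u)[i]? = (elev S v)[i]? := by rw [he]
          rw [List.getElem?_eq_getElem (by rw [elev_length]; exact hi),
            List.getElem?_eq_getElem (by rw [elev_length]; exact hiv)] at h1
          have h2 := Option.some.inj h1
          rw [elev_getElem S u i hi, elev_getElem S v i hiv, ih] at h2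
          have hmu : v.take i ++ [u[i]] ∈ S := by
            rw [← ih]; exact take_succ_mem hpre hu hi
          have hmv : v.take i ++ [v[i]] ∈ S := take_succ_mem hpre hv hiv
          rw [List.getD_eq_getElem _ _ hi, List.getD_eq_getElem _ _ hiv] at h2
          have heq : u[i] = v[i] := by
            rcases lt_trichotomy (u[i]'hi) (v[i]'hiv) with h | h | h
            · exact absurd h2 (cnt_strict S _ hmu h).ne
            · exact h
            · exact absurd h2.symm (cnt_strict S _ hmv h).ne
          rw [List.take_succ, List.take_succ, List.getElem?_eq_getElem hi,
            List.getElem?_eq_getElem hiv, ih, heq]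
        · rw [List.take_of_length_le (by omega), List.take_of_length_le (by omega)]
          rw [List.take_of_length_le (by omega), List.take_of_length_le (by omega)] at ih
          exact ih
    have := key u.length
    rwa [List.take_of_length_le le_rfl, List.take_of_length_le (by omega)] at this
  · -- (ii) image closed by prefix
    intro w v hw
    obtain ⟨u, hu, hue⟩ := hw
    have hm : w.length ≤ u.length := by
      have := congrArg List.length hue; simp [elev_length] at this; omega
    refine ⟨u.take w.length, take_mem hpre hu _, ?_⟩
    rw [elev_take S u _ hm, hue, List.take_left]
  · -- (iii)
    intro himp u hu v hv he
    have hlen : u.length = v.length := by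
      have := List.Forall₂.length_eq he; simpa [elev_length] using this
    have key : ∀ i, wle (u.take i) (v.take i) := by
      intro i
      induction i with
      | zero => exact List.Forall₂.nil
      | succ i ih =>
        by_cases hi : i < u.length
        · have hiv : i < v.length := hlen ▸ hi
          have hpu := take_mem hpre hu i
          have hqv := take_mem hpre hv i
          have himp' : ∀ a, v.take i ++ [a] ∈ S → u.take i ++ [a] ∈ S :=
            himp _ hpu _ hqv ih
          have h1 : (elev S u)[i]'(by rw [elev_length]; exact hi) ≤
              (elev S v)[i]'(by rw [elev_length]; exact hiv) := by
            have := (List.forall₂_iff_get.mp he).2 i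
              (by rw [elev_length]; exact hi) (by rw [elev_length]; exact hiv)
            simpa using this
          rw [elev_getElem S u i hi, elev_getElem S v i hiv,
            List.getD_eq_getElem _ _ hi, List.getD_eq_getElem _ _ hiv] at h1
          have h2 : cnt S (v.take i) (v[i]'hiv) ≤ cnt S (u.take i) (v[i]'hiv) :=
            cnt_cmp S himp' _
          have hvmem : u.take i ++ [v[i]'hiv] ∈ S := himp' _ (take_succ_mem hpre hv hiv)
          have hle : u[i]'hi ≤ v[i]'hiv := by
            by_contra hlt
            push_neg at hlt
            exact absurd (h1.trans h2) (cnt_strict S _ hvmem hlt).not_ge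
          rw [List.take_succ, List.take_succ, List.getElem?_eq_getElem hi,
            List.getElem?_eq_getElem hiv]
          exact List.rel_append ih (List.Forall₂.cons hle List.Forall₂.nil)
        · rw [List.take_of_length_le (by omega), List.take_of_length_le (by omega)]
          rw [List.take_of_length_le (by omega), List.take_of_length_le (by omega)] at ih
          exact ih
    have := key u.length
    rwa [List.take_of_length_le le_rfl, List.take_of_length_le (by omega)] at this
end

section
/- Let m ≥ 0 and n ≥ 1. An element u of Av_𝐦(n) is a maximal element of the poset Av_𝐦(n) if and only if u_1 + ⋯ + u_n = m(n−1). -/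
lemma forall2_sum_le {u v : List ℕ} (h : List.Forall₂ (· ≤ ·) u v) : u.sum ≤ v.sum := by
  induction h with
  | nil => simp
  | cons hab _ ih => simp only [List.sum_cons]; omega

lemma forall2_eq_of_sum {u v : List ℕ} (h : List.Forall₂ (· ≤ ·) u v)
    (hs : u.sum = v.sum) : u = v := by
  induction u generalizing v with
  | nil => cases h; rfl
  | cons a t ih =>
    cases h with
    | cons hab htail =>
      rename_i b t2
      have h2 := forall2_sum_le htail
      simp only [List.sum_cons] at hs
      have hab' : a = b := by omega
      rw [hab', ih htail (by omega)]

/-- An `𝐦`-avalanche `u` of size `n ≥ 1` is a maximal element of the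
poset `Av_𝐦(n)` if and only if the sum of its letters is `m(n-1)`. -/
theorem stmt5 (m n : ℕ) (hn : 1 ≤ n) (u : List ℕ)
    (hu : IsAval (fun i => m * i) u) (hlen : u.length = n) :
    (∀ v, IsAval (fun i => m * i) v → wle u v → u = v) ↔ u.sum = m * (n - 1) := by
  -- u is nonempty, write u = w ++ [a]
  rcases u.eq_nil_or_concat with rfl | ⟨w, a, hu'⟩
  · simp at hlen; omega
  rw [List.concat_eq_append] at hu'
  subst hu'
  have hw : w.length + 1 = n := by simpa using hlen
  subst hw
  have hn1 : w.length + 1 - 1 = w.length := by omega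
  -- the total sum is at most m * w.length
  have hsum : w.sum + a ≤ m * w.length := by
    have h1 : w.length < (w ++ [a]).length := by simp
    have := hu.2 w.length h1
    rw [show w.length + 1 = (w ++ [a]).length from by simp, List.take_length] at this
    simpa using this
  rw [hn1]
  constructor
  · intro hmax
    by_contra hne
    have hlt : w.sum + a < m * w.length := by
      simp only [List.sum_append, List.sum_cons, List.sum_nil, add_zero] at hne
      omega
    set v := w ++ [a + 1] with hv
    have hvav : IsAval (fun i => m * i) v := by
      constructor
      · intro i hi
        rcases lt_or_ge i w.length with h | h
        · rw [hv, List.getD_append w [a + 1] 0 i h]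
          have := hu.1 i (by simp; omega)
          rwa [List.getD_append w [a] 0 i h] at this
        · have hi' : i = w.length := by simp [hv] at hi; omega
          subst hi'
          have hg : v.getD w.length 0 = a + 1 := by simp [hv, List.getD_append_right]
          rw [hg]
          simpa using by omega
      · intro k hk
        rcases lt_or_ge (k + 1) (w.length + 1) with h | h
        · have hk1 : k + 1 ≤ w.length := by omega
          rw [hv, List.take_append_of_le_length hk1]
          have := hu.2 k (by simp; omega)
          rwa [List.take_append_of_le_length hk1] at this
        · have hk' : k = w.length := by simp [hv] at hk; omega
          subst hk'
          rw [show w.length + 1 = v.length from by simp [hv], List.take_length]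
          simpa [hv] using by omega
    have hle : wle (w ++ [a]) v := by
      exact List.rel_append (List.forall₂_same.mpr fun x _ => le_refl x)
        (List.forall₂_cons.mpr ⟨by omega, List.Forall₂.nil⟩)
    have heq := hmax v hvav hle
    have hse : (w ++ [a]).sum = v.sum := by rw [heq]
    simp [hv] at hse
  · intro hs v hvav hle
    have hvl : v.length = w.length + 1 := by
      rw [← List.Forall₂.length_eq hle]; simp
    have hvsum : v.sum ≤ m * w.length := by
      have h1 : w.length < v.length := by omega
      have h2 := hvav.2 w.length h1
      rw [show w.length + 1 = v.length from hvl.symm, List.take_length] at h2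
      simpa using h2
    have hle' := forall2_sum_le hle
    exact forall2_eq_of_sum hle (by omega)
end

section
/- For all m ≥ 0 and n ≥ 0, the number of words u = u_1⋯u_n of natural numbers such that u_1 + ⋯ + u_k ≤ m(k−1) for every k ∈ [n] is equal to the m-Fuss-Catalan number cat_m(n) = binom(mn+n, n)/(mn+1). -/
def Sset (m n c : ℕ) : Set (List ℕ) :=
  {u | u.length = n ∧ ∀ k < n, (u.take (k + 1)).sum ≤ m * k + c}

lemma Sset_zero (m c : ℕ) : Sset m 0 c = {([] : List ℕ)} := by
  ext u
  simp [Sset, List.length_eq_zero_iff]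

lemma mem_Sset_succ (m n c : ℕ) (u : List ℕ) :
    u ∈ Sset m (n + 1) c ↔
      ∃ a w, a ≤ c ∧ w ∈ Sset m n (m + (c - a)) ∧ u = a :: w := by
  constructor
  · rintro ⟨hlen, hsum⟩
    obtain ⟨a, w, rfl⟩ : ∃ a w, u = a :: w := by
      cases u with
      | nil => simp at hlen
      | cons a w => exact ⟨a, w, rfl⟩
    have ha : a ≤ c := by have := hsum 0 (by omega); simpa using this
    refine ⟨a, w, ha, ⟨by simpa using hlen, ?_⟩, rfl⟩
    intro k hk
    have h := hsum (k + 1) (by omega)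
    simp only [List.take_succ_cons, List.sum_cons] at h
    rw [Nat.mul_succ] at h
    omega
  · rintro ⟨a, w, ha, ⟨hlen, hsum⟩, rfl⟩
    refine ⟨by simp [hlen], ?_⟩
    intro k hk
    cases k with
    | zero => simpa using ha
    | succ j =>
      have h := hsum j (by omega)
      simp only [List.take_succ_cons, List.sum_cons]
      rw [Nat.mul_succ]
      omega

lemma Sset_decomp (m n c : ℕ) :
    Sset m (n + 1) c =
      ⋃ a ∈ Finset.range (c + 1), (fun w => a :: w) '' Sset m n (m + (c - a)) := by
  ext u
  rw [mem_Sset_succ]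
  simp only [Set.mem_iUnion, Finset.mem_range, Set.mem_image, Nat.lt_succ_iff]
  constructor
  · rintro ⟨a, w, ha, hw, rfl⟩; exact ⟨a, ha, w, hw, rfl⟩
  · rintro ⟨a, ha, w, hw, rfl⟩; exact ⟨a, w, ha, hw, rfl⟩

lemma Sset_finite (m : ℕ) : ∀ n c, (Sset m n c).Finite := by
  intro n
  induction n with
  | zero => intro c; rw [Sset_zero]; exact Set.finite_singleton _
  | succ n ih =>
    intro c
    rw [Sset_decomp]
    exact Set.Finite.biUnion (Finset.range (c + 1)).finite_toSet
      (fun a _ => ((ih _).image _))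

lemma ncard_Sset_succ (m n c : ℕ) :
    (Sset m (n + 1) c).ncard =
      ∑ a ∈ Finset.range (c + 1), (Sset m n (m + (c - a))).ncard := by
  classical
  have hT : ∀ a : ℕ, ((fun w => a :: w) '' Sset m n (m + (c - a))).Finite :=
    fun a => (Sset_finite m n _).image _
  have hset : Sset m (n + 1) c =
      ↑((Finset.range (c + 1)).biUnion fun a => (hT a).toFinset) := by
    rw [Sset_decomp]
    ext u
    simp [Set.Finite.mem_toFinset]
  rw [hset, Set.ncard_coe_finset, Finset.card_biUnion]
  · refine Finset.sum_congr rfl fun a _ => ?_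
    rw [← Set.ncard_coe_finset, Set.Finite.coe_toFinset,
      Set.ncard_image_of_injective _ (fun x y h => by injection h)]
  · intro a _ b _ hab
    simp only [Finset.disjoint_left, Set.Finite.mem_toFinset, Set.mem_image]
    rintro u ⟨w, _, rfl⟩ ⟨w', _, h⟩
    injection h with h1 h2
    exact hab h1.symm

lemma pascal_sum (B k c : ℕ) :
    (∑ j ∈ Finset.range (c + 1), (B + j).choose k) + B.choose (k + 1)
      = (B + c + 1).choose (k + 1) := by
  induction c with
  | zero =>
    simp [Nat.choose_succ_succ (B) k, Nat.add_comm]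
  | succ c ih =>
    rw [Finset.sum_range_succ]
    have hp : (B + c + 1 + 1).choose (k + 1)
        = (B + c + 1).choose k + (B + c + 1).choose (k + 1) :=
      Nat.choose_succ_succ _ _
    have : B + (c + 1) = B + c + 1 := by omega
    rw [this]
    omega

lemma key (m n : ℕ) : ∀ c : ℕ,
    (Sset m (n + 1) c).ncard + m * ((m + 1) * (n + 1) + c).choose n
      = ((m + 1) * (n + 1) + c).choose (n + 1) := by
  induction n with
  | zero =>
    intro c
    have h1 : (Sset m 1 c).ncard = c + 1 := by
      rw [ncard_Sset_succ]
      have : ∀ a ∈ Finset.range (c + 1), (Sset m 0 (m + (c - a))).ncard = 1 := by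
        intro a _
        rw [Sset_zero]
        exact Set.ncard_singleton _
      rw [Finset.sum_congr rfl this]
      simp
    rw [h1]
    have h2 : (m + 1) * (0 + 1) + c = m + 1 + c := by ring
    rw [h2, Nat.choose_one_right, Nat.choose_zero_right]
    omega
  | succ n ih =>
    intro c
    set B : ℕ := (m + 1) * (n + 1) + m with hB
    have hB' : (m + 1) * (n + 1 + 1) + c = B + c + 1 := by rw [hB]; ring
    rw [hB']
    rw [ncard_Sset_succ]
    -- E1 : sum of IH
    have E1 : (∑ a ∈ Finset.range (c + 1), (Sset m (n + 1) (m + (c - a))).ncard)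
        + m * (∑ a ∈ Finset.range (c + 1), (B + (c - a)).choose n)
        = ∑ a ∈ Finset.range (c + 1), (B + (c - a)).choose (n + 1) := by
      rw [Finset.mul_sum, ← Finset.sum_add_distrib]
      refine Finset.sum_congr rfl fun a _ => ?_
      have h := ih (m + (c - a))
      have harith : (m + 1) * (n + 1) + (m + (c - a)) = B + (c - a) := by
        rw [hB]; ring
      rw [harith] at h
      exact h
    -- reflect sums
    have hrefl : ∀ g : ℕ → ℕ,
        ∑ a ∈ Finset.range (c + 1), g (c - a) = ∑ j ∈ Finset.range (c + 1), g j := by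
      intro g
      have h := Finset.sum_range_reflect g (c + 1)
      simpa using h
    rw [hrefl (fun d => (B + d).choose n), hrefl (fun d => (B + d).choose (n + 1))] at E1
    have E2 := pascal_sum B n c
    have E3 := pascal_sum B (n + 1) c
    -- E4 : B.choose (n+1+1) = m * B.choose (n+1)
    have E4 : B.choose (n + 1 + 1) = m * B.choose (n + 1) := by
      have h := Nat.choose_succ_right_eq B (n + 1)
      have hsub : B - (n + 1) = m * (n + 1 + 1) := by
        have hBe : B = m * (n + 1 + 1) + (n + 1) := by rw [hB]; ring
        omega
      rw [hsub] at h
      have h2 : B.choose (n + 1 + 1) * (n + 1 + 1) = m * B.choose (n + 1) * (n + 1 + 1) := by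
        rw [h]; ring
      exact Nat.eq_of_mul_eq_mul_right (by omega) h2
    -- combine
    set x := ∑ a ∈ Finset.range (c + 1), (Sset m (n + 1) (m + (c - a))).ncard
    set s1 := ∑ j ∈ Finset.range (c + 1), (B + j).choose n
    set s2 := ∑ j ∈ Finset.range (c + 1), (B + j).choose (n + 1)
    have hgoal : x + m * (B + c + 1).choose (n + 1)
        = x + m * s1 + m * B.choose (n + 1) := by
      rw [← E2, Nat.mul_add]; ring
    rw [hgoal, ← E4, E1]
    exact E3

theorem stmt6' (m n : ℕ) :
    Set.ncard {u : List ℕ | u.length = n ∧ ∀ k < n, (u.take (k + 1)).sum ≤ m * k}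
      = (m * n + n).choose n / (m * n + 1) := by
  have hset : {u : List ℕ | u.length = n ∧ ∀ k < n, (u.take (k + 1)).sum ≤ m * k}
      = Sset m n 0 := by
    simp [Sset]
  rw [hset]
  cases n with
  | zero => rw [Sset_zero]; simp
  | succ n' =>
    have hk := key m n' 0
    have hN : (m + 1) * (n' + 1) + 0 = m * (n' + 1) + (n' + 1) := by ring
    rw [hN] at hk
    set N := m * (n' + 1) + (n' + 1) with hNdef
    have E2' := Nat.choose_succ_right_eq N n'
    have hsub : N - n' = m * (n' + 1) + 1 := by omega
    rw [hsub] at E2'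
    set f := (Sset m (n' + 1) 0).ncard
    set A := N.choose n'
    set Bn := N.choose (n' + 1)
    set K := m * (n' + 1) + 1 with hK
    have hC : f * K = Bn := by
      have h2 : f * K + m * (A * K) = Bn * K := by rw [← hk]; ring
      have h3 : A * K = Bn * (n' + 1) := E2'.symm
      rw [h3] at h2
      have h4 : Bn * K = m * (Bn * (n' + 1)) + Bn := by rw [hK]; ring
      linarith [h2, h4]
    rw [← hC]
    exact (Nat.mul_div_cancel f (by omega)).symm

/-- The number of words `u₁⋯uₙ` of natural numbers such that
`u₁ + ⋯ + u_k ≤ m(k-1)` for all `k ∈ [n]` is the `m`-Fuss-Catalan number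
`binom(mn+n, n)/(mn+1)`. -/
theorem stmt6 (m n : ℕ) :
    Set.ncard {u : List ℕ | u.length = n ∧ ∀ k < n, (u.take (k + 1)).sum ≤ m * k}
      = (m * n + n).choose n / (m * n + 1) := by
  exact stmt6' m n
end

section
/- For any range map δ and any n ≥ 0, the image of Hi_δ(n) under the Hi_δ-elevation map e_{Hi_δ} is exactly Av_δ(n), the set of δ-avalanches of size n. -/
lemma getD_map_range (f : ℕ → ℕ) {i n : ℕ} (h : i < n) :
    ((List.range n).map f).getD i 0 = f i := by
  rw [List.getD_eq_getElem _ _ (by simpa using h)]; simp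

lemma getD_take_append_lt (u : List ℕ) (a : ℕ) {i j : ℕ} (hj : j < i) (hi : i ≤ u.length) :
    (u.take i ++ [a]).getD j 0 = u.getD j 0 := by
  rw [List.getD_append _ _ _ _ (by simp [List.length_take]; omega)]
  rw [List.getD_eq_getElem _ _ (by simp [List.length_take]; omega),
    List.getD_eq_getElem _ _ (by omega), List.getElem_take]

lemma getD_take_append_eq (u : List ℕ) (a : ℕ) {i : ℕ} (hi : i ≤ u.length) :
    (u.take i ++ [a]).getD i 0 = a := by
  rw [List.getD_eq_getElem _ _ (by simp [List.length_take]; omega)]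
  rw [List.getElem_append_right (by simp [List.length_take])]
  simp [List.length_take, Nat.min_eq_left hi]

/-- Characterization of hill extensions. -/
lemma hill_ext_iff (δ : ℕ → ℕ) {u : List ℕ} (hu : IsHill δ u) {i : ℕ} (hi : i < u.length)
    (a : ℕ) :
    IsHill δ (u.take i ++ [a]) ↔ (∀ x ∈ u.take i, x ≤ a) ∧ a ≤ δ i := by
  constructor
  · rintro ⟨hc, hs⟩
    refine ⟨?_, ?_⟩
    · intro x hx
      rcases List.pairwise_append.mp hs with ⟨_, _, h⟩
      exact h x hx a (by simp)
    · have := hc i (by simp [List.length_take]; omega)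
      rwa [getD_take_append_eq u a hi.le] at this
  · rintro ⟨hall, ha⟩
    refine ⟨?_, ?_⟩
    · intro j hj
      simp only [List.length_append, List.length_take, List.length_singleton] at hj
      have hj' : j < i + 1 := by omega
      rcases Nat.lt_or_ge j i with h | h
      · rw [getD_take_append_lt u a h hi.le]
        exact hu.1 j (by omega)
      · have : j = i := by omega
        subst this
        rw [getD_take_append_eq u a hi.le]; exact ha
    · rw [List.pairwise_append]
      exact ⟨(hu.2.sublist (List.take_sublist i u)), by simp,
        fun x hx b hb => by simp at hb; subst hb; exact hall x hx⟩

lemma sorted_take_all_le {u : List ℕ} (hs : List.Pairwise (· ≤ ·) u) {i : ℕ} (hi0 : 0 < i)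
    (hi : i < u.length) (a : ℕ) :
    (∀ x ∈ u.take i, x ≤ a) ↔ u.getD (i - 1) 0 ≤ a := by
  constructor
  · intro h
    have hmem : u.getD (i-1) 0 ∈ u.take i := by
      rw [List.getD_eq_getElem _ _ (by omega)]
      rw [List.mem_iff_getElem]
      exact ⟨i - 1, by simp [List.length_take]; omega, by rw [List.getElem_take]⟩
    exact h _ hmem
  · intro h x hx
    rw [List.mem_iff_getElem] at hx
    obtain ⟨j, hj, rfl⟩ := hx
    have hj' : j < i := by simp [List.length_take] at hj; omega
    rw [List.getElem_take]
    rcases Nat.lt_or_ge j (i-1) with h' | h'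
    · have := hs.rel_get_of_lt (a := ⟨j, by omega⟩) (b := ⟨i-1, by omega⟩) (by simpa using h')
      simp only [List.get_eq_getElem] at this
      calc u[j] ≤ u[i-1] := this
        _ = u.getD (i-1) 0 := (List.getD_eq_getElem _ _ (by omega)).symm
        _ ≤ a := h
    · have : j = i - 1 := by omega
      subst this
      rw [← List.getD_eq_getElem u 0 (by omega)]
      exact h

/-- Value of an elevation entry for a hill. -/
lemma elev_entry (δ : ℕ → ℕ) {u : List ℕ} (hu : IsHill δ u) {i : ℕ} (hi : i < u.length) :
    Set.ncard {a : ℕ | a < u.getD i 0 ∧ u.take i ++ [a] ∈ {x | IsHill δ x}}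
      = u.getD i 0 - (if i = 0 then 0 else u.getD (i - 1) 0) := by
  have hδ : u.getD i 0 ≤ δ i := hu.1 i hi
  have hset : {a : ℕ | a < u.getD i 0 ∧ u.take i ++ [a] ∈ {x | IsHill δ x}}
      = Set.Ico (if i = 0 then 0 else u.getD (i - 1) 0) (u.getD i 0) := by
    ext a
    simp only [Set.mem_setOf_eq, Set.mem_Ico]
    rw [hill_ext_iff δ hu hi a]
    rcases Nat.eq_zero_or_pos i with h0 | h0
    · subst h0
      simp only [if_pos rfl, List.take_zero]
      constructor
      · rintro ⟨h1, _⟩; exact ⟨Nat.zero_le _, h1⟩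
      · rintro ⟨_, h1⟩; exact ⟨h1, ⟨by simp, by omega⟩⟩
    · rw [if_neg (by omega), sorted_take_all_le hu.2 h0 hi a]
      constructor
      · rintro ⟨h1, h2, _⟩; exact ⟨h2, h1⟩
      · rintro ⟨h1, h2⟩; exact ⟨h2, h1, by omega⟩
  rw [hset, ← Finset.coe_Ico, Set.ncard_coe_finset, Nat.card_Ico]
lemma sorted_getD_mono {u : List ℕ} (hs : List.Pairwise (· ≤ ·) u) {j k : ℕ} (hjk : j < k)
    (hk : k < u.length) : u.getD j 0 ≤ u.getD k 0 := by
  rw [List.getD_eq_getElem _ _ (by omega), List.getD_eq_getElem _ _ hk]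
  exact hs.rel_get_of_lt (a := ⟨j, by omega⟩) (b := ⟨k, hk⟩) (by simpa using hjk)


/-- For any range map `δ` and `n ≥ 0`, the image of `Hi_δ(n)` under
the `Hi_δ`-elevation map is exactly `Av_δ(n)`. -/
theorem stmt8 (δ : ℕ → ℕ) (n : ℕ) :
    {w | ∃ u, IsHill δ u ∧ u.length = n ∧ elev {x | IsHill δ x} u = w}
      = {w | IsAval δ w ∧ w.length = n} := by
  ext w
  simp only [Set.mem_setOf_eq]
  constructor
  · rintro ⟨u, hu, hlen, rfl⟩
    set d : ℕ → ℕ := fun i => u.getD i 0 - (if i = 0 then 0 else u.getD (i - 1) 0) with hd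
    have helev : elev {x | IsHill δ x} u = (List.range n).map d := by
      rw [elev, hlen]
      exact List.map_congr_left fun i hi =>
        elev_entry δ hu (by rw [hlen]; exact List.mem_range.mp hi)
    have hsum : ∀ k < n, ((List.range (k + 1)).map d).sum = u.getD k 0 := by
      intro k hk
      induction k with
      | zero => show ((List.range 1).map d).sum = _; rw [show List.range 1 = [0] from rfl]; simp [hd]
      | succ m ih =>
        rw [List.range_succ, List.map_append, List.sum_append, ih (by omega)]
        have hmono : u.getD m 0 ≤ u.getD (m + 1) 0 :=
          sorted_getD_mono hu.2 (Nat.lt_succ_self m) (by omega)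
        simp only [List.map_singleton, List.sum_singleton, hd]
        rw [if_neg (Nat.succ_ne_zero m)]
        simp only [Nat.add_sub_cancel]
        omega
    rw [helev]
    refine ⟨⟨?_, ?_⟩, by simp⟩
    · intro i hi
      simp only [List.length_map, List.length_range] at hi
      rw [getD_map_range d hi]
      have := hu.1 i (by omega)
      simp only [hd]
      omega
    · intro k hk
      simp only [List.length_map, List.length_range] at hk
      rw [← List.map_take, List.take_range, Nat.min_eq_left (by omega), hsum k hk]
      exact hu.1 k (by omega)
  · rintro ⟨⟨hc, hs⟩, rfl⟩
    set s : ℕ → ℕ := fun k => (w.take (k + 1)).sum with hsdef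
    set u : List ℕ := (List.range w.length).map s with hu
    have hulen : u.length = w.length := by simp [hu]
    have hugetD : ∀ i < w.length, u.getD i 0 = s i := fun i hi => getD_map_range s hi
    have hstep : ∀ k, k + 1 < w.length → s (k + 1) = s k + w.getD (k + 1) 0 := by
      intro k hk
      have := List.sum_take_succ w (k + 1) hk
      rw [hsdef]
      simp only []
      rw [this, List.getD_eq_getElem _ _ hk]
    have hmono : Monotone s := by
      apply monotone_nat_of_le_succ
      intro k
      rcases Nat.lt_or_ge (k + 1) w.length with h | h
      · rw [hstep k h]; omega
      · have h1 : w.take (k + 1) = w := List.take_of_length_le h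
        have h2 : w.take (k + 2) = w := List.take_of_length_le (by omega)
        simp only [hsdef, h1, h2, le_refl]
    have hhill : IsHill δ u := by
      constructor
      · intro i hi
        rw [hulen] at hi
        rw [hugetD i hi]
        exact hs i hi
      · rw [List.pairwise_iff_getElem]
        intro i j hi hj hij
        simp only [hu, List.getElem_map, List.getElem_range]
        exact hmono (le_of_lt hij)
    refine ⟨u, hhill, hulen, ?_⟩
    apply List.ext_getElem
    · simp [elev, hulen]
    · intro i hi1 hi2
      simp only [elev, List.length_map, List.length_range] at hi1
      rw [hulen] at hi1
      have hentry : (elev {x | IsHill δ x} u)[i]'(by simpa [elev, hulen] using hi1)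
          = Set.ncard {a : ℕ | a < u.getD i 0 ∧ u.take i ++ [a] ∈ {x | IsHill δ x}} := by
        simp [elev]
      rw [hentry, elev_entry δ hhill (by omega)]
      rw [hugetD i hi1]
      rcases Nat.eq_zero_or_pos i with h0 | h0
      · subst h0
        have : s 0 = w[0] := by
          simp only [hsdef]
          rw [List.sum_take_succ w 0 hi1]
          simp
        rw [if_pos rfl]
        omega
      · rw [if_neg (by omega), hugetD (i - 1) (by omega)]
        have := hstep (i - 1) (by omega)
        rw [Nat.sub_add_cancel h0] at this
        rw [this, List.getD_eq_getElem _ _ hi1]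
        omega
end

section
/- For all m ≥ 0 and n ≥ 0, the number of weakly increasing words u_1 ≤ u_2 ≤ ⋯ ≤ u_n of natural numbers with u_i ≤ m(i−1) for all i ∈ [n] is equal to the m-Fuss-Catalan number cat_m(n) = binom(mn+n, n)/(mn+1). -/
/-- Ballot-type counts for the Fuss–Catalan recursion. -/
def fcb (m : ℕ) : ℕ → ℕ → ℕ
  | 0, _ => 1
  | n+1, s => ∑ j ∈ Finset.range (s+1), fcb m n (m + s - j)

/-- Finset of hills built recursively. -/
def hillFS (m : ℕ) : ℕ → ℕ → Finset (List ℕ)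
  | 0, _ => {[]}
  | n+1, s => (Finset.range (s+1)).biUnion fun j =>
      (hillFS m n (m + s - j)).image fun w => j :: w.map (· + j)

lemma hillFS_card (m : ℕ) : ∀ n s, (hillFS m n s).card = fcb m n s := by
  intro n
  induction n with
  | zero => intro s; simp [hillFS, fcb]
  | succ n ih =>
    intro s
    rw [hillFS, fcb, Finset.card_biUnion]
    · refine Finset.sum_congr rfl fun j _ => ?_
      rw [Finset.card_image_of_injective _ ?_, ih]
      intro w w' h
      simp only [List.cons.injEq] at h
      exact List.map_injective_iff.2 (add_left_injective j) h.2
    · intro x _ y _ hxy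
      simp only [Finset.disjoint_left, Finset.mem_image]
      rintro u ⟨w, _, rfl⟩ ⟨w', _, h⟩
      have := congrArg List.head? h
      simp only [List.head?_cons, Option.some.injEq] at this
      exact hxy this.symm

lemma getD_map (f : ℕ → ℕ) (w : List ℕ) (i : ℕ) (hi : i < w.length) :
    (w.map f).getD i 0 = f (w.getD i 0) := by
  rw [List.getD_eq_getElem _ _ (by simpa using hi), List.getD_eq_getElem _ _ hi,
    List.getElem_map]

lemma sorted_map_mono {f : ℕ → ℕ} (hf : ∀ a b : ℕ, a ≤ b → f a ≤ f b) {l : List ℕ}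
    (h : l.Pairwise (· ≤ ·)) : (l.map f).Pairwise (· ≤ ·) :=
  List.Pairwise.map f hf h

lemma mem_hillFS (m : ℕ) : ∀ n s (u : List ℕ), u ∈ hillFS m n s ↔
    u.length = n ∧ List.Pairwise (· ≤ ·) u ∧ ∀ i < n, u.getD i 0 ≤ m * i + s := by
  intro n
  induction n with
  | zero =>
    intro s u
    simp only [hillFS, Finset.mem_singleton]
    constructor
    · rintro rfl; simp
    · rintro ⟨h, -, -⟩; exact List.length_eq_zero_iff.1 h
  | succ n ih =>
    intro s u
    simp only [hillFS, Finset.mem_biUnion, Finset.mem_range, Finset.mem_image,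
      Nat.lt_succ_iff]
    constructor
    · rintro ⟨j, hj, w, hw, rfl⟩
      obtain ⟨hlen, hsort, hbd⟩ := (ih _ w).1 hw
      refine ⟨by simp [hlen], ?_, ?_⟩
      · rw [List.pairwise_cons]
        refine ⟨fun b hb => ?_, sorted_map_mono (fun a b h => by omega) hsort⟩
        simp only [List.mem_map] at hb
        obtain ⟨x, -, rfl⟩ := hb
        exact Nat.le_add_left j x
      · intro i hi
        match i with
        | 0 => simpa using hj
        | i+1 =>
          rw [List.getD_cons_succ, getD_map _ _ _ (by omega)]
          have := hbd i (by omega)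
          have hm : m * (i+1) = m*i + m := by ring
          omega
    · rintro ⟨hlen, hsort, hbd⟩
      match u with
      | a :: v =>
        simp only [List.length_cons, Nat.succ_inj] at hlen
        rw [List.pairwise_cons] at hsort
        have ha : a ≤ s := by simpa using hbd 0 (by omega)
        refine ⟨a, ha, v.map (· - a), (ih _ _).2 ⟨by simp [hlen], ?_, ?_⟩, ?_⟩
        · exact sorted_map_mono (fun x y h => by omega) hsort.2
        · intro i hi
          rw [getD_map _ _ _ (by omega)]
          have := hbd (i+1) (by omega)
          rw [List.getD_cons_succ] at this
          have hm : m * (i+1) = m*i + m := by ring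
          omega
        · show _ = a :: v
          congr 1
          rw [List.map_map]
          refine (List.map_congr_left fun x hx => ?_).trans (List.map_id v)
          have := hsort.1 x hx
          simp only [Function.comp_apply, id]
          omega

lemma fcb_succ_succ (m n s : ℕ) :
    fcb m (n+1) (s+1) = fcb m (n+1) s + fcb m n (m+s+1) := by
  show (∑ j ∈ Finset.range (s+1+1), fcb m n (m + (s+1) - j)) = _
  rw [Finset.sum_range_succ']
  congr 1
  · refine Finset.sum_congr rfl fun j hj => ?_
    congr 1
    simp only [Finset.mem_range] at hj
    omega

lemma fcb_eq (m : ℕ) : ∀ n s, (m*n + s + 1) * fcb m n s = (s+1) * (m*n + n + s).choose n := by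
  intro n
  induction n with
  | zero => intro s; simp [fcb]
  | succ n ih =>
    intro s
    induction s with
    | zero =>
      have h0 : fcb m (n+1) 0 = fcb m n m := by simp [fcb]
      rw [h0, show m*(n+1)+(n+1)+0 = (m*n+n+m)+1 from by ring]
      have h := ih m
      have hs := Nat.add_one_mul_choose_eq (m*n+n+m) n
      apply Nat.eq_of_mul_eq_mul_left (show 0 < n+1 by omega)
      zify at h hs ⊢
      linear_combination (n+1 : ℤ)*h + hs
    | succ s ihs =>
      have hA := ihs
      have hB := ih (m+s+1)
      rw [show m*n+n+(m+s+1) = m*(n+1)+(n+1)+s from by ring] at hB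
      have h3 := Nat.choose_succ_right_eq (m*(n+1)+(n+1)+s) n
      rw [show m*(n+1)+(n+1)+s - n = m*(n+1)+s+1 from by omega] at h3
      rw [fcb_succ_succ, show m*(n+1)+(n+1)+(s+1) = (m*(n+1)+(n+1)+s)+1 from by ring,
        Nat.choose_succ_succ]
      apply Nat.eq_of_mul_eq_mul_left (show 0 < m*(n+1)+s+1 by omega)
      zify at hA hB h3 ⊢
      linear_combination ((m*(n+1)+s+1 : ℤ)+1)*hA + (m*(n+1)+s+1 : ℤ)*hB - (m : ℤ)*h3

/-- The number of weakly increasing words `u₁ ≤ ⋯ ≤ uₙ` of natural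
numbers with `u_i ≤ m(i-1)` for all `i ∈ [n]` is the `m`-Fuss-Catalan number
`binom(mn+n, n)/(mn+1)`. -/
theorem stmt9 (m n : ℕ) :
    Set.ncard {u : List ℕ | u.length = n ∧ List.Pairwise (· ≤ ·) u ∧
      ∀ i < n, u.getD i 0 ≤ m * i} = (m * n + n).choose n / (m * n + 1) := by

  have hset : {u : List ℕ | u.length = n ∧ List.Pairwise (· ≤ ·) u ∧
      ∀ i < n, u.getD i 0 ≤ m * i} = ↑(hillFS m n 0) := by
    ext u
    simp [mem_hillFS]
  rw [hset, Set.ncard_coe_finset, hillFS_card]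
  have h := fcb_eq m n 0
  have h' : (m*n+n).choose n = (m*n+1) * fcb m n 0 := by simpa using h.symm
  rw [h', Nat.mul_div_cancel_left _ (by omega)]
end

section
/- For any increasing range map δ (i.e., δ(i) < δ(i+1) for all i ≥ 1) and any n ≥ 0, the image of Ca_δ(n) under the Ca_δ-elevation map e_{Ca_δ} is exactly Av_δ(n), the set of δ-avalanches of size n. -/
namespace Stmt13Aux

def V (δ : ℕ → ℕ) (q : List ℕ) : Set ℕ := {a | IsCanyon δ (q ++ [a])}

lemma delta_add {δ : ℕ → ℕ} (hδ : ∀ i, δ i < δ (i+1)) (m k : ℕ) : δ m + k ≤ δ (m + k) := by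
  induction k with
  | zero => simp
  | succ k ih => have := hδ (m+k); have h2 : m + (k+1) = (m+k)+1 := rfl; rw [h2]; omega

lemma getD_append_last (q : List ℕ) (a : ℕ) : (q ++ [a]).getD q.length 0 = a := by
  rw [List.getD_append_right _ _ _ _ le_rfl]; simp

lemma canyon_append {δ : ℕ → ℕ} (q : List ℕ) (a : ℕ) :
    IsCanyon δ (q ++ [a]) ↔ IsCanyon δ q ∧ a ≤ δ q.length ∧
      ∀ j, 1 ≤ j → j ≤ a → j ≤ q.length → q.getD (q.length - j) 0 + j ≤ a := by
  have hlen : (q ++ [a]).length = q.length + 1 := by simp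
  constructor
  · rintro ⟨hc, hv⟩
    refine ⟨⟨?_, ?_⟩, ?_, ?_⟩
    · intro i hi
      have := hc i (by omega)
      rwa [List.getD_append _ _ _ _ hi] at this
    · intro i hi j h1 h2 h3
      have := hv i (by omega) j h1 (by rwa [List.getD_append _ _ _ _ hi]) h3
      rwa [List.getD_append _ _ _ _ hi, List.getD_append _ _ _ _ (by omega)] at this
    · have := hc q.length (by omega)
      rwa [getD_append_last] at this
    · intro j h1 h2 h3
      have := hv q.length (by omega) j h1 (by rwa [getD_append_last]) (by omega)
      rw [getD_append_last] at this
      rwa [List.getD_append _ _ _ _ (by omega : q.length - j < q.length)] at this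
  · rintro ⟨⟨hc, hv⟩, hle, hnew⟩
    constructor
    · intro i hi
      rcases Nat.lt_or_ge i q.length with h | h
      · rw [List.getD_append _ _ _ _ h]; exact hc i h
      · have : i = q.length := by omega
        subst this; rwa [getD_append_last]
    · intro i hi j h1 h2 h3
      rcases Nat.lt_or_ge i q.length with h | h
      · rw [List.getD_append _ _ _ _ h] at h2 ⊢
        rw [List.getD_append _ _ _ _ (by omega)]
        exact hv i h j h1 h2 h3
      · have hi' : i = q.length := by omega
        subst hi'
        rw [getD_append_last] at h2 ⊢
        rw [List.getD_append _ _ _ _ (by omega)]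
        exact hnew j h1 h2 (by omega)

lemma V_subset {δ : ℕ → ℕ} (q : List ℕ) : V δ q ⊆ Set.Iic (δ q.length) :=
  fun a ha => ((canyon_append q a).1 ha).2.1

lemma V_finite {δ : ℕ → ℕ} (q : List ℕ) : (V δ q).Finite :=
  (Set.finite_Iic _).subset (V_subset q)

lemma top_mem_V {δ : ℕ → ℕ} (hδ : ∀ i, δ i < δ (i+1)) (q : List ℕ) (hq : IsCanyon δ q) :
    δ q.length ∈ V δ q := by
  rw [V, Set.mem_setOf_eq, canyon_append]
  refine ⟨hq, le_rfl, fun j h1 h2 h3 => ?_⟩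
  have hcl := hq.1 (q.length - j) (by omega)
  have hda := delta_add hδ (q.length - j) j
  have h4 : q.length - j + j = q.length := by omega
  rw [h4] at hda
  omega

lemma elev_nil (S : Set (List ℕ)) : elev S [] = [] := by simp [elev]

lemma elev_length (S : Set (List ℕ)) (u : List ℕ) : (elev S u).length = u.length := by
  simp [elev]

lemma elev_append (S : Set (List ℕ)) (q : List ℕ) (c : ℕ) :
    elev S (q ++ [c]) = elev S q ++ [Set.ncard {a | a < c ∧ q ++ [a] ∈ S}] := by
  unfold elev
  rw [List.length_append, List.length_singleton, List.range_succ, List.map_append]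
  congr 1
  · apply List.map_congr_left
    intro i hi; rw [List.mem_range] at hi
    have h1 : (q ++ [c]).getD i 0 = q.getD i 0 := List.getD_append _ _ _ _ hi
    have h2 : (q ++ [c]).take i = q.take i := by
      rw [List.take_append, Nat.sub_eq_zero_of_le (le_of_lt hi)]
      simp
    rw [h1, h2]
  · simp only [List.map_singleton]
    congr 1
    rw [List.take_left, getD_append_last q c]

lemma gq_ge {δ : ℕ → ℕ} (hδ : ∀ i, δ i < δ (i+1)) (q : List ℕ) (hq : IsCliff δ q) (b : ℕ)
    (hb : δ q.length ≤ b) :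
    ∀ j, 1 ≤ j → j ≤ b → j ≤ q.length → q.getD (q.length - j) 0 + j ≤ b := by
  intro j h1 h2 h3
  have hcl := hq (q.length - j) (by omega)
  have hda := delta_add hδ (q.length - j) j
  have h4 : q.length - j + j = q.length := by omega
  rw [h4] at hda; omega

lemma V_append {δ : ℕ → ℕ} (hδ : ∀ i, δ i < δ (i+1)) (q : List ℕ) (c : ℕ)
    (hq : IsCanyon δ q) (hc : c ∈ V δ q) :
    V δ (q ++ [c]) = insert 0 ((· + 1) ''
      ({b ∈ V δ q | c ≤ b} ∪ Set.Ico (δ q.length) (δ (q.length + 1)))) := by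
  have hcle : c ≤ δ q.length := V_subset q hc
  have hc' : IsCanyon δ (q ++ [c]) := hc
  ext a
  simp only [Set.mem_insert_iff, Set.mem_image, Set.mem_union, Set.mem_setOf_eq, Set.mem_Ico,
    Set.mem_sep_iff]
  rcases Nat.eq_zero_or_pos a with rfl | ha
  · constructor
    · intro _; left; rfl
    · intro _
      exact (canyon_append _ 0).2 ⟨hc', Nat.zero_le _, fun j h1 h2 _ => absurd h2 (by omega)⟩
  · have hmemiff : a ∈ V δ (q ++ [c]) ↔
        (a ≤ δ (q.length + 1) ∧ c < a ∧
          ∀ j, 1 ≤ j → j ≤ a - 1 → j ≤ q.length → q.getD (q.length - j) 0 + j ≤ a - 1) := by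
      rw [V, Set.mem_setOf_eq, canyon_append]
      simp only [List.length_append, List.length_singleton]
      constructor
      · rintro ⟨-, hle, hnew⟩
        refine ⟨hle, ?_, ?_⟩
        · have := hnew 1 le_rfl ha (by omega)
          rwa [show q.length + 1 - 1 = q.length from rfl, getD_append_last] at this
        · intro j h1 h2 h3
          have := hnew (j+1) (by omega) (by omega) (by omega)
          rw [show q.length + 1 - (j+1) = q.length - j from by omega,
            List.getD_append _ _ _ _ (by omega)] at this
          omega
      · rintro ⟨hle, hca, hgq⟩
        refine ⟨hc', hle, ?_⟩
        intro j h1 h2 h3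
        rcases Nat.lt_or_ge j 2 with hj | hj
        · have hj1 : j = 1 := by omega
          subst hj1
          rw [show q.length + 1 - 1 = q.length from rfl, getD_append_last]
          omega
        · have := hgq (j-1) (by omega) (by omega) (by omega)
          rw [show q.length + 1 - j = q.length - (j-1) from by omega,
            List.getD_append _ _ _ _ (by omega)]
          omega
    rw [hmemiff]
    have hbmem : a - 1 ∈ V δ q ↔ (a - 1 ≤ δ q.length ∧
        ∀ j, 1 ≤ j → j ≤ a - 1 → j ≤ q.length → q.getD (q.length - j) 0 + j ≤ a - 1) := by
      rw [V, Set.mem_setOf_eq, canyon_append]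
      constructor
      · rintro ⟨-, h1, h2⟩; exact ⟨h1, h2⟩
      · rintro ⟨h1, h2⟩; exact ⟨hq, h1, h2⟩
    constructor
    · rintro ⟨hle, hca, hgq⟩
      right
      refine ⟨a - 1, ?_, by omega⟩
      rcases Nat.lt_or_ge (a - 1) (δ q.length + 1) with h | h
      · exact Or.inl ⟨hbmem.2 ⟨by omega, hgq⟩, by omega⟩
      · exact Or.inr ⟨by omega, by omega⟩
    · rintro (rfl | ⟨b, hb, rfl⟩)
      · omega
      · rcases hb with ⟨hbV, hcb⟩ | ⟨hb1, hb2⟩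
        · have := hbmem.1 (by simpa using hbV)
          have hd := hδ q.length
          refine ⟨by omega, by omega, ?_⟩
          intro j h1 h2 h3
          have := this.2 j h1 (by omega) h3
          omega
        · refine ⟨by omega, by omega, ?_⟩
          intro j h1 h2 h3
          have := gq_ge hδ q hq.1 (b + 1 - 1) (by omega) j h1 (by omega) h3
          omega

lemma ncard_V_append {δ : ℕ → ℕ} (hδ : ∀ i, δ i < δ (i+1)) (q : List ℕ) (c : ℕ)
    (hq : IsCanyon δ q) (hc : c ∈ V δ q) :
    (V δ (q ++ [c])).ncard + δ q.length + 1 = {b ∈ V δ q | c ≤ b}.ncard + δ (q.length + 1) + 1 := by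
  have hcle : c ≤ δ q.length := V_subset q hc
  have hA : ({b ∈ V δ q | c ≤ b}).Finite := (V_finite q).subset (Set.sep_subset _ _)
  have hB : (Set.Ico (δ q.length) (δ (q.length + 1))).Finite := Set.finite_Ico _ _
  have hABi : {b ∈ V δ q | c ≤ b} ∩ Set.Ico (δ q.length) (δ (q.length + 1))
      = {δ q.length} := by
    ext x
    simp only [Set.mem_inter_iff, Set.mem_singleton_iff, Set.mem_sep_iff, Set.mem_Ico]
    constructor
    · rintro ⟨⟨hxV, -⟩, ⟨h1, -⟩⟩
      exact le_antisymm (V_subset q hxV) h1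
    · rintro rfl
      exact ⟨⟨top_mem_V hδ q hq, hcle⟩, le_rfl, hδ _⟩
  have huni := Set.ncard_union_add_ncard_inter {b ∈ V δ q | c ≤ b}
    (Set.Ico (δ q.length) (δ (q.length + 1))) hA hB
  rw [hABi, Set.ncard_singleton] at huni
  have hBcard : (Set.Ico (δ q.length) (δ (q.length + 1))).ncard
      = δ (q.length + 1) - δ q.length := by
    rw [← Finset.coe_Ico, Set.ncard_coe_finset, Nat.card_Ico]
  have hinj : Function.Injective (· + 1 : ℕ → ℕ) := add_left_injective 1
  have h0 : (0 : ℕ) ∉ (· + 1) ''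
      ({b ∈ V δ q | c ≤ b} ∪ Set.Ico (δ q.length) (δ (q.length + 1))) := by
    rintro ⟨b, -, hb⟩; simp at hb
  have hfin : (V δ (q ++ [c])).ncard =
      ({b ∈ V δ q | c ≤ b} ∪ Set.Ico (δ q.length) (δ (q.length + 1))).ncard + 1 := by
    rw [V_append hδ q c hq hc, Set.ncard_insert_of_notMem h0 ((hA.union hB).image _),
      Set.ncard_image_of_injective _ hinj]
  have hd := hδ q.length
  omega

lemma canyon_nil {δ : ℕ → ℕ} : IsCanyon δ [] :=
  ⟨fun i hi => absurd hi (by simp), fun i hi => absurd hi (by simp)⟩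

lemma key {δ : ℕ → ℕ} (hδ : ∀ i, δ i < δ (i+1)) (q : List ℕ) (hq : IsCanyon δ q) :
    (V δ q).ncard + (elev {x | IsCanyon δ x} q).sum = δ q.length + 1 := by
  induction q using List.reverseRecOn with
  | nil =>
    have hV : V δ ([] : List ℕ) = Set.Iic (δ 0) := by
      ext a
      rw [V, Set.mem_setOf_eq, Set.mem_Iic]
      constructor
      · intro h; exact ((canyon_append [] a).1 h).2.1
      · intro h
        exact (canyon_append [] a).2 ⟨canyon_nil, h, fun j h1 h2 h3 => by simp at h3; omega⟩
    rw [hV, elev_nil, ← Finset.coe_Iic, Set.ncard_coe_finset, Nat.card_Iic]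
    simp
  | append_singleton q c ih =>
    have hq' : IsCanyon δ q := ((canyon_append q c).1 hq).1
    have hc : c ∈ V δ q := hq
    have ih' := ih hq'
    rw [elev_append]
    have hset : {a | a < c ∧ q ++ [a] ∈ {x | IsCanyon δ x}} = {b ∈ V δ q | b < c} := by
      ext b
      simp only [Set.mem_setOf_eq, Set.mem_sep_iff, V]
      tauto
    rw [hset]
    have hsplit : {b ∈ V δ q | b < c}.ncard + {b ∈ V δ q | c ≤ b}.ncard = (V δ q).ncard := by
      rw [← Set.ncard_union_eq (by
          rw [Set.disjoint_left]; rintro x ⟨-, h1⟩ ⟨-, h2⟩; omega)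
        ((V_finite q).subset (Set.sep_subset _ _)) ((V_finite q).subset (Set.sep_subset _ _))]
      congr 1
      ext x
      simp only [Set.mem_union, Set.mem_sep_iff]
      constructor
      · rintro (⟨h, -⟩ | ⟨h, -⟩) <;> exact h
      · intro h; rcases Nat.lt_or_ge x c with h' | h'
        · exact Or.inl ⟨h, h'⟩
        · exact Or.inr ⟨h, h'⟩
    have hstep := ncard_V_append hδ q c hq' hc
    rw [List.sum_append, List.length_append, List.sum_cons, List.sum_nil,
      List.length_singleton]
    omega

lemma aval_nil {δ : ℕ → ℕ} : IsAval δ [] :=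
  ⟨fun i hi => absurd hi (by simp), fun k hk => absurd hk (by simp)⟩

lemma forward {δ : ℕ → ℕ} (hδ : ∀ i, δ i < δ (i+1)) (u : List ℕ) (hu : IsCanyon δ u) :
    IsAval δ (elev {x | IsCanyon δ x} u) := by
  induction u using List.reverseRecOn with
  | nil => rw [elev_nil]; exact aval_nil
  | append_singleton u c ih =>
    have hu' : IsCanyon δ u := ((canyon_append u c).1 hu).1
    have hc : c ∈ V δ u := hu
    have ihav := ih hu'
    rw [elev_append]
    have hset : {a | a < c ∧ u ++ [a] ∈ {x | IsCanyon δ x}} = {b ∈ V δ u | b < c} := by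
      ext b; simp only [Set.mem_setOf_eq, Set.mem_sep_iff, V]; tauto
    rw [hset]
    have hss : {b ∈ V δ u | b < c} ⊂ V δ u := by
      refine ⟨Set.sep_subset _ _, fun h => ?_⟩
      exact absurd (h hc).2 (lt_irrefl c)
    have hrlt : {b ∈ V δ u | b < c}.ncard < (V δ u).ncard :=
      Set.ncard_lt_ncard hss (V_finite u)
    have hkey := key hδ u hu'
    have hlen : (elev {x | IsCanyon δ x} u).length = u.length := elev_length _ _
    have hbound : (elev {x | IsCanyon δ x} u).sum + {b ∈ V δ u | b < c}.ncard
        ≤ δ u.length := by omega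
    have hlast := getD_append_last (elev {x | IsCanyon δ x} u) ({b ∈ V δ u | b < c}.ncard)
    rw [hlen] at hlast
    constructor
    · intro i hi
      rw [List.length_append, hlen, List.length_singleton] at hi
      rcases Nat.lt_or_ge i u.length with h | h
      · rw [List.getD_append _ _ _ _ (by rw [hlen]; exact h)]
        exact ihav.1 i (by rwa [hlen])
      · have hieq : i = u.length := by omega
        subst hieq
        rw [hlast]
        omega
    · intro k hk
      rw [List.length_append, hlen, List.length_singleton] at hk
      rcases Nat.lt_or_ge k u.length with h | h
      · rw [List.take_append, Nat.sub_eq_zero_of_le (by omega),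
          List.take_zero, List.append_nil]
        exact ihav.2 k (by rwa [hlen])
      · have hke : k = u.length := by omega
        subst hke
        have hwhole : u.length + 1
            = (elev {x | IsCanyon δ x} u ++ [{b ∈ V δ u | b < c}.ncard]).length := by
          simp [hlen]
        rw [hwhole, List.take_length, List.sum_append, List.sum_cons, List.sum_nil]
        omega

lemma rank_exists (T : Set ℕ) (hT : T.Finite) (c : ℕ) (hc : c < T.ncard) :
    ∃ a ∈ T, {b ∈ T | b < a}.ncard = c := by
  classical
  have hsetOf : {x : ℕ | x ∈ T} = T := Set.setOf_mem_eq
  have hlt : ∀ hf : (setOf (· ∈ T)).Finite, c < hf.toFinset.card := by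
    intro hf
    have h1 : {x : ℕ | x ∈ T}.ncard = hf.toFinset.card := Set.ncard_eq_toFinset_card {x : ℕ | x ∈ T} hf
    have h2 : {x : ℕ | x ∈ T}.ncard = T.ncard := by rw [hsetOf]
    omega
  have ha : Nat.nth (· ∈ T) c ∈ T := Nat.nth_mem c hlt
  have hcount : Nat.count (· ∈ T) (Nat.nth (· ∈ T) c) = c := Nat.count_nth hlt
  refine ⟨Nat.nth (· ∈ T) c, ha, ?_⟩
  rw [Nat.count_eq_card_filter_range] at hcount
  have hfs : {b ∈ T | b < Nat.nth (· ∈ T) c}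
      = ↑({x ∈ Finset.range (Nat.nth (· ∈ T) c) | x ∈ T}) := by
    ext x
    simp only [Set.mem_sep_iff, Finset.coe_filter, Finset.mem_range, Set.mem_setOf_eq]
    tauto
  rw [hfs, Set.ncard_coe_finset]
  exact hcount

lemma backward {δ : ℕ → ℕ} (hδ : ∀ i, δ i < δ (i+1)) (w : List ℕ) (hw : IsAval δ w) :
    ∃ u, IsCanyon δ u ∧ u.length = w.length ∧ elev {x | IsCanyon δ x} u = w := by
  induction w using List.reverseRecOn with
  | nil => exact ⟨[], canyon_nil, rfl, elev_nil _⟩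
  | append_singleton v c ih =>
    have hlen' : (v ++ [c]).length = v.length + 1 := by simp
    have hv : IsAval δ v := by
      constructor
      · intro i hi
        have := hw.1 i (by omega)
        rwa [List.getD_append _ _ _ _ hi] at this
      · intro k hk
        have := hw.2 k (by omega)
        rwa [List.take_append, Nat.sub_eq_zero_of_le (by omega),
          List.take_zero, List.append_nil] at this
    obtain ⟨u, hu, hlen, helev⟩ := ih hv
    have hkey := key hδ u hu
    rw [hlen, helev] at hkey
    have hbound : v.sum + c ≤ δ v.length := by
      have := hw.2 v.length (by omega)
      rw [show v.length + 1 = (v ++ [c]).length from (by simp), List.take_length,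
        List.sum_append, List.sum_cons, List.sum_nil] at this
      exact this
    have hclt : c < (V δ u).ncard := by omega
    obtain ⟨a, haV, harank⟩ := rank_exists (V δ u) (V_finite u) c hclt
    refine ⟨u ++ [a], haV, by simp [hlen], ?_⟩
    rw [elev_append]
    have hset : {x | x < a ∧ u ++ [x] ∈ {x | IsCanyon δ x}} = {b ∈ V δ u | b < a} := by
      ext b; simp only [Set.mem_setOf_eq, Set.mem_sep_iff, V]; tauto
    rw [hset, harank, helev]

end Stmt13Aux

/-- For any increasing range map `δ` and `n ≥ 0`, the image of
`Ca_δ(n)` under the `Ca_δ`-elevation map is exactly `Av_δ(n)`. -/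
theorem stmt13 (δ : ℕ → ℕ) (hδ : ∀ i, δ i < δ (i + 1)) (n : ℕ) :
    {w | ∃ u, IsCanyon δ u ∧ u.length = n ∧ elev {x | IsCanyon δ x} u = w}
      = {w | IsAval δ w ∧ w.length = n} := by
  ext w
  simp only [Set.mem_setOf_eq]
  constructor
  · rintro ⟨u, hu, hlen, rfl⟩
    exact ⟨Stmt13Aux.forward hδ u hu, by rw [Stmt13Aux.elev_length, hlen]⟩
  · rintro ⟨hw, hlen⟩
    obtain ⟨u, hu, hul, he⟩ := Stmt13Aux.backward hδ w hw
    exact ⟨u, hu, hul.trans hlen, he⟩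
end
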